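/- arXiv:1107.1533 — 6 statements merged into one kernel-verified Lean document; each statement's English description precedes it below -/
import Mathlib

section
/- Let S_n be hypergeometrically distributed: the number of red balls in a sample of size n drawn without replacement from an urn with a red and b blue balls (n ≤ a + b). Let p = a/(a+b). Then for every real u, E[e^{u S_n}] ≤ (p e^u + 1 - p)^n. -/
open Finset

private lemma vandermonde' (a b n : ℕ) :
    ∑ k ∈ range (n+1), a.choose k * b.choose (n-k) = (a+b).choose n := by
  rw [Nat.add_choose_eq, Finset.Nat.sum_antidiagonal_eq_sum_range_succ_mk]

private lemma real_choose_succ (m j : ℕ) :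
    ((j:ℝ)+1) * (m.choose (j+1) : ℝ) = ((m:ℝ) - j) * (m.choose j : ℝ) := by
  rcases le_or_gt j m with h | h
  · have := Nat.choose_succ_right_eq m j
    have h2 : ((m.choose (j+1) * (j+1) : ℕ) : ℝ) = ((m.choose j * (m - j) : ℕ) : ℝ) :=
      congrArg Nat.cast this
    push_cast [Nat.cast_sub h] at h2
    linarith
  · rw [Nat.choose_eq_zero_of_lt h, Nat.choose_eq_zero_of_lt (h.trans (Nat.lt_succ_self j))]
    simp

private lemma real_succ_choose (m j : ℕ) :
    ((j:ℝ)+1) * (m.choose (j+1) : ℝ) = (m:ℝ) * ((m-1).choose j : ℝ) := by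
  cases m with
  | zero => simp
  | succ m =>
    have := Nat.add_one_mul_choose_eq m j
    have h2 : ((m.succ * m.choose j : ℕ) : ℝ) = ((m.succ.choose j.succ * j.succ : ℕ) : ℝ) :=
      congrArg Nat.cast this
    push_cast at h2
    simp only [Nat.succ_sub_one]
    push_cast
    linarith

private lemma hyp_mean (a b n : ℕ) :
    ∑ k ∈ range (n+2), (k:ℝ) * (a.choose k * b.choose (n+1-k)) =
      (a:ℝ) * ((a-1+b).choose n : ℝ) := by
  rw [Finset.sum_range_succ']
  simp only [Nat.cast_zero, zero_mul, add_zero]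
  push_cast
  have h : ∀ i ∈ range (n+1), ((i:ℝ)+1) * (a.choose (i+1) * b.choose (n-i))
      = (a:ℝ) * ((a-1).choose i * b.choose (n-i)) := by
    intro i _
    rw [← mul_assoc, real_succ_choose a i, mul_assoc]
  calc ∑ i ∈ range (n+1), ((i:ℝ)+1) * (a.choose (i+1) * b.choose (n-i))
      = ∑ i ∈ range (n+1), (a:ℝ) * ((a-1).choose i * b.choose (n-i)) :=
        Finset.sum_congr rfl h
    _ = (a:ℝ) * ∑ i ∈ range (n+1), ((a-1).choose i * b.choose (n-i) : ℝ) := by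
        rw [Finset.mul_sum]
    _ = (a:ℝ) * ((a-1+b).choose n : ℝ) := by
        congr 1
        exact_mod_cast congrArg Nat.cast (vandermonde' (a-1) b n)

private lemma chebyshev_weighted (s : Finset ℕ) (μ F G : ℕ → ℝ)
    (hμ : ∀ i ∈ s, 0 ≤ μ i) (h1 : ∑ i ∈ s, μ i = 1)
    (hFG : ∀ i ∈ s, ∀ j ∈ s, 0 ≤ (F i - F j) * (G j - G i)) :
    ∑ i ∈ s, μ i * (F i * G i) ≤ (∑ i ∈ s, μ i * F i) * (∑ i ∈ s, μ i * G i) := by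
  have key : 0 ≤ ∑ i ∈ s, ∑ j ∈ s, μ i * μ j * ((F i - F j) * (G j - G i)) := by
    refine Finset.sum_nonneg fun i hi => Finset.sum_nonneg fun j hj => ?_
    exact mul_nonneg (mul_nonneg (hμ i hi) (hμ j hj)) (hFG i hi j hj)
  have expand : ∑ i ∈ s, ∑ j ∈ s, μ i * μ j * ((F i - F j) * (G j - G i))
      = 2 * ((∑ i ∈ s, μ i * F i) * (∑ i ∈ s, μ i * G i)
          - (∑ i ∈ s, μ i) * (∑ i ∈ s, μ i * (F i * G i))) := by
    have inner : ∀ i ∈ s, ∑ j ∈ s, μ i * μ j * ((F i - F j) * (G j - G i))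
        = (μ i * F i) * (∑ j ∈ s, μ j * G j)
          - μ i * (F i * G i) * (∑ j ∈ s, μ j)
          - μ i * (∑ j ∈ s, μ j * (F j * G j))
          + (μ i * G i) * (∑ j ∈ s, μ j * F j) := by
      intro i _
      rw [Finset.mul_sum, Finset.mul_sum, Finset.mul_sum, Finset.mul_sum,
        ← Finset.sum_sub_distrib, ← Finset.sum_sub_distrib, ← Finset.sum_add_distrib]
      exact Finset.sum_congr rfl fun j _ => by ring
    rw [Finset.sum_congr rfl inner]
    rw [Finset.sum_add_distrib, Finset.sum_sub_distrib, Finset.sum_sub_distrib,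
      ← Finset.sum_mul, ← Finset.sum_mul, ← Finset.sum_mul, ← Finset.sum_mul]
    ring
  rw [expand, h1] at key
  linarith

set_option maxHeartbeats 1600000 in
/-- The moment generating function of the hypergeometric distribution (number of red
balls in `n` draws without replacement from `a` red and `b` blue balls) is dominated by
the binomial one with the same mean `p = a/(a+b)`: `E[e^{u S_n}] ≤ (p e^u + 1 - p)^n`. -/
theorem hypergeometric_mgf_le_binomial (a b n : ℕ) (hab : 0 < a + b) (hn : n ≤ a + b)
    (u : ℝ) :
    ∑ k ∈ Finset.range (n + 1),
        Real.exp (u * k) * ((a.choose k * b.choose (n - k) : ℝ) / ((a + b).choose n))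
      ≤ ((a : ℝ) / (a + b) * Real.exp u + 1 - (a : ℝ) / (a + b)) ^ n := by
  revert hn
  induction n with
  | zero => intro hn; simp
  | succ n ih =>
    intro hn
    have hn' : n ≤ a + b := by omega
    set x := Real.exp u with hxdef
    have hx : 0 < x := Real.exp_pos u
    have hS : (0:ℝ) < (a:ℝ) + b := by exact_mod_cast hab
    have hC : (0:ℝ) < ((a+b).choose n : ℝ) := by exact_mod_cast Nat.choose_pos hn'
    have hC' : (0:ℝ) < ((a+b).choose (n+1) : ℝ) := by exact_mod_cast Nat.choose_pos hn
    have hD : (0:ℝ) < (a:ℝ) + b - n := by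
      have : (n:ℝ) < (a:ℝ) + b := by exact_mod_cast Nat.lt_of_lt_of_le (Nat.lt_succ_self n) hn
      linarith
    set D : ℝ := (a:ℝ) + b - n with hDdef
    set μ : ℕ → ℝ := fun k => (a.choose k * b.choose (n-k) : ℝ) / ((a+b).choose n) with hμdef
    have hexp : ∀ k : ℕ, Real.exp (u * k) = x ^ k := fun k => by
      rw [mul_comm]; exact Real.exp_nat_mul u k
    -- key cast identity
    have hkey : ((n:ℝ)+1) * ((a+b).choose (n+1) : ℝ) = D * ((a+b).choose n : ℝ) := by
      rw [hDdef]
      have := real_choose_succ (a+b) n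
      push_cast at this ⊢
      linear_combination this
    -- total mass one
    have hsum : ∑ k ∈ range (n+1), μ k = 1 := by
      simp only [hμdef]
      rw [← Finset.sum_div]
      rw [show ∑ k ∈ range (n+1), ((a.choose k : ℝ) * (b.choose (n-k) : ℝ))
          = ((a+b).choose n : ℝ) by exact_mod_cast congrArg Nat.cast (vandermonde' a b n)]
      exact div_self (ne_of_gt hC)
    -- mean
    have hmean : ∑ k ∈ range (n+1), (k:ℝ) * μ k = (n:ℝ) * a / ((a:ℝ) + b) := by
      cases n with
      | zero => simp [hμdef]
      | succ m =>
        have hm := hyp_mean a b m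
        simp only [hμdef]
        have : ∑ k ∈ range (m+2), (k:ℝ) * ((a.choose k * b.choose (m+1-k) : ℝ) / ((a+b).choose (m+1)))
            = (∑ k ∈ range (m+2), (k:ℝ) * (a.choose k * b.choose (m+1-k) : ℝ)) / ((a+b).choose (m+1)) := by
          rw [Finset.sum_div]
          exact Finset.sum_congr rfl fun k _ => by ring
        rw [this, hm]
        rcases Nat.eq_zero_or_pos a with ha | ha
        · simp [ha]
        · have hab1 : a - 1 + b = a + b - 1 := by omega
          have hid := real_succ_choose (a+b) m
          rw [hab1]
          have hC1 : (0:ℝ) < ((a+b).choose (m+1) : ℝ) := by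
            exact_mod_cast Nat.choose_pos hn'
          rw [div_eq_div_iff (ne_of_gt hC1) (ne_of_gt hS)]
          push_cast at hid ⊢
          nlinarith [hid]
    -- the recursion identity
    have cast_nk : ∀ k ∈ range (n+1), ((n-k:ℕ):ℝ) = (n:ℝ) - k := by
      intro k hk
      exact_mod_cast Nat.cast_sub (Nat.lt_succ_iff.mp (Finset.mem_range.mp hk))
    have hN : ((n:ℝ)+1) * ∑ k ∈ range (n+2), x^k * ((a.choose k : ℝ) * (b.choose (n+1-k) : ℝ))
        = ∑ k ∈ range (n+1), x^k * ((a.choose k : ℝ) * (b.choose (n-k) : ℝ))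
            * (((b:ℝ) - ((n:ℝ)-k)) + x*((a:ℝ)-k)) := by
      rw [Finset.mul_sum]
      have split : ∀ k ∈ range (n+2), ((n:ℝ)+1) * (x^k * ((a.choose k : ℝ) * (b.choose (n+1-k) : ℝ)))
          = x^k * (a.choose k : ℝ) * (((n:ℝ)+1-k) * (b.choose (n+1-k) : ℝ))
            + x^k * ((k:ℝ) * (a.choose k : ℝ)) * (b.choose (n+1-k) : ℝ) := fun k _ => by ring
      rw [Finset.sum_congr rfl split, Finset.sum_add_distrib]
      have e1 : ∑ k ∈ range (n+2), x^k * (a.choose k : ℝ) * (((n:ℝ)+1-k) * (b.choose (n+1-k) : ℝ))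
          = ∑ k ∈ range (n+1), x^k * (a.choose k : ℝ) * (((b:ℝ)-((n:ℝ)-k)) * (b.choose (n-k) : ℝ)) := by
        rw [Finset.sum_range_succ]
        have last : x^(n+1) * (a.choose (n+1) : ℝ) * (((n:ℝ)+1-((n+1:ℕ):ℝ)) * (b.choose (n+1-(n+1)) : ℝ)) = 0 := by
          push_cast; ring
        rw [last, add_zero]
        refine Finset.sum_congr rfl fun k hk => ?_
        have hk' : k ≤ n := Nat.lt_succ_iff.mp (Finset.mem_range.mp hk)
        have h1 : n+1-k = (n-k)+1 := by omega
        rw [h1]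
        have h2 := real_choose_succ b (n-k)
        rw [cast_nk k hk] at h2
        linear_combination (x^k * (a.choose k : ℝ)) * h2
      have e2 : ∑ k ∈ range (n+2), x^k * ((k:ℝ) * (a.choose k : ℝ)) * (b.choose (n+1-k) : ℝ)
          = ∑ k ∈ range (n+1), x^k * ((x*((a:ℝ)-k)) * (a.choose k : ℝ)) * (b.choose (n-k) : ℝ) := by
        rw [Finset.sum_range_succ']
        simp only [Nat.cast_zero, zero_mul, mul_zero, add_zero]
        refine Finset.sum_congr rfl fun k hk => ?_
        have h1 : n+1-(k+1) = n-k := by omega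
        rw [h1]
        have h2 := real_choose_succ a k
        have h3 : x^(k+1) = x^k * x := pow_succ x k
        push_cast
        linear_combination (x^k * x * (b.choose (n-k) : ℝ)) * h2 + ((k:ℝ)+1) * (a.choose (k+1) : ℝ) * (b.choose (n-k):ℝ) * h3
      rw [e1, e2, ← Finset.sum_add_distrib]
      exact Finset.sum_congr rfl fun k _ => by ring
    have hI : ∑ k ∈ range (n+2), x^k * ((a.choose k * b.choose (n+1-k) : ℝ) / ((a+b).choose (n+1)))
        = ∑ k ∈ range (n+1), μ k * (x^k * (1 + (x-1)*((a:ℝ)-k)/D)) := by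
      have lhs_eq : ∑ k ∈ range (n+2), x^k * ((a.choose k * b.choose (n+1-k) : ℝ) / ((a+b).choose (n+1)))
          = (∑ k ∈ range (n+2), x^k * ((a.choose k : ℝ) * (b.choose (n+1-k) : ℝ))) / ((a+b).choose (n+1)) := by
        rw [Finset.sum_div]
        exact Finset.sum_congr rfl fun k _ => by ring
      have rhs_eq : ∑ k ∈ range (n+1), μ k * (x^k * (1 + (x-1)*((a:ℝ)-k)/D))
          = (∑ k ∈ range (n+1), x^k * ((a.choose k : ℝ) * (b.choose (n-k) : ℝ))
              * (((b:ℝ) - ((n:ℝ)-k)) + x*((a:ℝ)-k))) / (((a+b).choose n : ℝ) * D) := by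
        rw [Finset.sum_div]
        refine Finset.sum_congr rfl fun k hk => ?_
        simp only [hμdef]
        field_simp
        ring
      rw [hDdef] at hkey
      rw [lhs_eq, rhs_eq, div_eq_div_iff (ne_of_gt hC') (by positivity)]
      linear_combination (-(∑ k ∈ range (n+2), x^k * ((a.choose k : ℝ) * (b.choose (n+1-k) : ℝ)))) * hkey
        + ((a+b).choose (n+1) : ℝ) * hN
    -- nonnegativity of weights
    have hμpos : ∀ k ∈ range (n+1), 0 ≤ μ k := by
      intro k _
      simp only [hμdef]
      positivity
    -- antivariation
    have hFG : ∀ i ∈ range (n+1), ∀ j ∈ range (n+1),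
        0 ≤ (x^i - x^j) * ((1 + (x-1)*((a:ℝ)-j)/D) - (1 + (x-1)*((a:ℝ)-i)/D)) := by
      intro i _ j _
      have hgg : (1 + (x-1)*((a:ℝ)-j)/D) - (1 + (x-1)*((a:ℝ)-i)/D)
          = (x-1) * ((i:ℝ)-j) / D := by field_simp; ring
      rw [hgg]
      rcases le_total i j with hij | hij
      · have hij' : (i:ℝ) ≤ j := by exact_mod_cast hij
        rcases le_total x 1 with hx1 | hx1
        · have hp : x^j ≤ x^i := pow_le_pow_of_le_one hx.le hx1 hij
          have h1 : 0 ≤ x^i - x^j := by linarith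
          have h2 : 0 ≤ (x-1) * ((i:ℝ)-j) / D := by
            apply div_nonneg _ hD.le
            nlinarith
          exact mul_nonneg h1 h2
        · have hp : x^i ≤ x^j := pow_le_pow_right₀ hx1 hij
          have h1 : x^i - x^j ≤ 0 := by linarith
          have h2 : (x-1) * ((i:ℝ)-j) / D ≤ 0 := by
            apply div_nonpos_of_nonpos_of_nonneg _ hD.le
            nlinarith
          nlinarith [mul_nonneg (neg_nonneg.2 h1) (neg_nonneg.2 h2)]
      · have hij' : (j:ℝ) ≤ i := by exact_mod_cast hij
        rcases le_total x 1 with hx1 | hx1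
        · have hp : x^i ≤ x^j := pow_le_pow_of_le_one hx.le hx1 hij
          have h1 : x^i - x^j ≤ 0 := by linarith
          have h2 : (x-1) * ((i:ℝ)-j) / D ≤ 0 := by
            apply div_nonpos_of_nonpos_of_nonneg _ hD.le
            nlinarith
          nlinarith [mul_nonneg (neg_nonneg.2 h1) (neg_nonneg.2 h2)]
        · have hp : x^j ≤ x^i := pow_le_pow_right₀ hx1 hij
          have h1 : 0 ≤ x^i - x^j := by linarith
          have h2 : 0 ≤ (x-1) * ((i:ℝ)-j) / D := by
            apply div_nonneg _ hD.le
            nlinarith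
          exact mul_nonneg h1 h2
    have cheb := chebyshev_weighted (range (n+1)) μ (fun k => x^k)
      (fun k => 1 + (x-1)*((a:ℝ)-k)/D) hμpos hsum hFG
    -- sum of G
    have hG : ∑ k ∈ range (n+1), μ k * (1 + (x-1)*((a:ℝ)-k)/D)
        = (a:ℝ)/((a:ℝ)+b) * x + 1 - (a:ℝ)/((a:ℝ)+b) := by
      have expand : ∀ k ∈ range (n+1), μ k * (1 + (x-1)*((a:ℝ)-k)/D)
          = μ k + ((x-1)/D*(a:ℝ)) * μ k - ((x-1)/D) * ((k:ℝ) * μ k) := by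
        intro k _
        field_simp
        ring
      rw [Finset.sum_congr rfl expand, Finset.sum_sub_distrib, Finset.sum_add_distrib,
        ← Finset.mul_sum, ← Finset.mul_sum, hsum, hmean]
      simp only [hDdef]
      have hD' : (a:ℝ) + b - n ≠ 0 := hD.ne'
      field_simp
      ring
    -- final assembly
    have hp0 : 0 ≤ (a:ℝ)/((a:ℝ)+b) := by positivity
    have hp1 : (a:ℝ)/((a:ℝ)+b) ≤ 1 := by
      rw [div_le_one hS]
      have : (0:ℝ) ≤ b := Nat.cast_nonneg b
      linarith
    have hg : 0 ≤ (a:ℝ)/((a:ℝ)+b) * x + 1 - (a:ℝ)/((a:ℝ)+b) := by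
      have := mul_nonneg hp0 hx.le
      linarith
    calc ∑ k ∈ range (n+1+1), Real.exp (u * k) * ((a.choose k * b.choose (n+1-k) : ℝ) / ((a+b).choose (n+1)))
        = ∑ k ∈ range (n+2), x^k * ((a.choose k * b.choose (n+1-k) : ℝ) / ((a+b).choose (n+1))) := by
          exact Finset.sum_congr rfl fun k _ => by rw [hexp]
      _ = ∑ k ∈ range (n+1), μ k * (x^k * (1 + (x-1)*((a:ℝ)-k)/D)) := hI
      _ ≤ (∑ k ∈ range (n+1), μ k * x^k) * (∑ k ∈ range (n+1), μ k * (1 + (x-1)*((a:ℝ)-k)/D)) := cheb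
      _ = (∑ k ∈ range (n+1), Real.exp (u * k) * μ k) * ((a:ℝ)/((a:ℝ)+b) * x + 1 - (a:ℝ)/((a:ℝ)+b)) := by
          rw [hG]
          congr 1
          exact Finset.sum_congr rfl fun k _ => by rw [hexp]; ring
      _ ≤ ((a:ℝ)/((a:ℝ)+b) * x + 1 - (a:ℝ)/((a:ℝ)+b))^n * ((a:ℝ)/((a:ℝ)+b) * x + 1 - (a:ℝ)/((a:ℝ)+b)) := by
          apply mul_le_mul_of_nonneg_right _ hg
          exact ih hn'
      _ = ((a:ℝ)/((a:ℝ)+b) * x + 1 - (a:ℝ)/((a:ℝ)+b))^(n+1) := (pow_succ _ n).symm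
end

section
/- Let S_n be hypergeometric with parameters a (red), b (blue), sample size n ≤ a+b, and set p = a/(a+b). For q > 0 with p + q < 1, Pr[S_n ≥ (p+q)n] ≤ ((p/(p+q))^{p+q} ((1-p)/(1-p-q))^{1-p-q})^n. -/
open Finset

lemma hyp_sub_mul_le (a b j : ℕ) : (a - j) * (a + b) ≤ a * (a + b - j) := by
  rcases le_total j a with h | h
  · have h2 : j ≤ a + b := le_trans h (Nat.le_add_right _ _)
    zify [h, h2]
    nlinarith [mul_nonneg (by positivity : (0:ℤ) ≤ (j:ℤ)) (by positivity : (0:ℤ) ≤ (b:ℤ))]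
  · rw [Nat.sub_eq_zero_of_le h, Nat.zero_mul]; exact Nat.zero_le _

lemma hyp_df_le (a b : ℕ) : ∀ j : ℕ,
    a.descFactorial j * (a+b)^j ≤ a^j * (a+b).descFactorial j
  | 0 => by simp
  | (j+1) => by
    rw [Nat.descFactorial_succ, Nat.descFactorial_succ, pow_succ, pow_succ]
    calc (a - j) * a.descFactorial j * ((a+b)^j * (a+b))
        = ((a-j) * (a+b)) * (a.descFactorial j * (a+b)^j) := by ring
      _ ≤ (a * (a+b-j)) * (a^j * (a+b).descFactorial j) :=
          Nat.mul_le_mul (hyp_sub_mul_le a b j) (hyp_df_le a b j)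
      _ = a^j * a * ((a+b-j) * (a+b).descFactorial j) := by ring

lemma hyp_choose_mul_pow_le (a b j : ℕ) :
    a.choose j * (a+b)^j ≤ a^j * (a+b).choose j := by
  have h := hyp_df_le a b j
  rw [Nat.descFactorial_eq_factorial_mul_choose, Nat.descFactorial_eq_factorial_mul_choose] at h
  refine Nat.le_of_mul_le_mul_left ?_ (Nat.factorial_pos j)
  calc j.factorial * (a.choose j * (a+b)^j) = (j.factorial * a.choose j) * (a+b)^j := by ring
    _ ≤ a^j * (j.factorial * (a+b).choose j) := h
    _ = j.factorial * (a^j * (a+b).choose j) := by ring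

lemma hyp_B_nat (a b n j : ℕ) (hjn : j ≤ n) (hn : n ≤ a + b) :
    a.choose j * ((a+b-j).choose (n-j)) * (a+b)^j ≤ n.choose j * a^j * (a+b).choose n := by
  have hid : (a+b).choose n * n.choose j = (a+b).choose j * ((a+b-j).choose (n-j)) :=
    Nat.choose_mul hjn
  calc a.choose j * ((a+b-j).choose (n-j)) * (a+b)^j
      = (a.choose j * (a+b)^j) * ((a+b-j).choose (n-j)) := by ring
    _ ≤ (a^j * (a+b).choose j) * ((a+b-j).choose (n-j)) :=
        Nat.mul_le_mul_right _ (hyp_choose_mul_pow_le a b j)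
    _ = a^j * ((a+b).choose j * ((a+b-j).choose (n-j))) := by ring
    _ = a^j * ((a+b).choose n * n.choose j) := by rw [hid]
    _ = n.choose j * a^j * (a+b).choose n := by ring

lemma hyp_A_nat (a b n j : ℕ) (hjn : j ≤ n) :
    ∑ k ∈ range (n+1), k.choose j * (a.choose k * b.choose (n-k))
      = a.choose j * ((a+b-j).choose (n-j)) := by
  rcases le_or_gt j a with hja | hja
  · have h1 : ∑ k ∈ range (n+1), k.choose j * (a.choose k * b.choose (n-k))
        = ∑ k ∈ Ico j (n+1), k.choose j * (a.choose k * b.choose (n-k)) := by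
      refine (Finset.sum_subset ?_ ?_).symm
      · rw [range_eq_Ico]; exact Finset.Ico_subset_Ico (Nat.zero_le j) le_rfl
      · intro x hx hnx
        have : x < j := by simp only [mem_range, mem_Ico] at hx hnx; omega
        simp [Nat.choose_eq_zero_of_lt this]
    rw [h1, Finset.sum_Ico_eq_sum_range]
    have h2 : n + 1 - j = (n - j) + 1 := by omega
    have h3 : a + b - j = (a - j) + b := by omega
    rw [h2, h3, Nat.add_choose_eq, Finset.Nat.sum_antidiagonal_eq_sum_range_succ_mk,
      Finset.mul_sum]
    refine Finset.sum_congr rfl fun m hm => ?_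
    have h4 : n - (j+m) = n - j - m := by omega
    rw [h4]
    rcases le_or_gt (j+m) a with h5 | h5
    · have h := Nat.choose_mul (n := a) (k := j+m) (s := j) (Nat.le_add_right _ _)
      rw [Nat.add_sub_cancel_left] at h
      calc (j+m).choose j * (a.choose (j+m) * b.choose (n-j-m))
          = (a.choose (j+m) * (j+m).choose j) * b.choose (n-j-m) := by ring
        _ = (a.choose j * (a-j).choose m) * b.choose (n-j-m) := by rw [h]
        _ = a.choose j * ((a-j).choose m * b.choose (n-j-m)) := by ring
    · have e1 : a.choose (j+m) = 0 := Nat.choose_eq_zero_of_lt h5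
      have e2 : (a-j).choose m = 0 := Nat.choose_eq_zero_of_lt (by omega)
      simp [e1, e2]
  · have e : a.choose j = 0 := Nat.choose_eq_zero_of_lt hja
    rw [e, Nat.zero_mul]
    refine Finset.sum_eq_zero fun k hk => ?_
    rcases le_or_gt k a with h | h
    · simp [Nat.choose_eq_zero_of_lt (show k < j by omega)]
    · simp [Nat.choose_eq_zero_of_lt h]

/-- Hoeffding/Chvátal tail bound for the hypergeometric distribution: with
`p = a/(a+b)`, `q > 0` and `p + q < 1`,
`Pr[S_n ≥ (p+q)n] ≤ ((p/(p+q))^(p+q) ((1-p)/(1-p-q))^(1-p-q))^n`. -/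
theorem hypergeometric_tail_bound (a b n : ℕ) (hab : 0 < a + b) (hn : n ≤ a + b)
    (p q : ℝ) (hp : p = (a : ℝ) / (a + b)) (hq : 0 < q) (hpq : p + q < 1) :
    ∑ k ∈ Finset.range (n + 1),
        (if (p + q) * n ≤ (k : ℝ) then
          (a.choose k * b.choose (n - k) : ℝ) / ((a + b).choose n) else 0)
      ≤ ((p / (p + q)) ^ (p + q) * ((1 - p) / (1 - p - q)) ^ (1 - p - q)) ^ n := by
  have hbpos : (0:ℝ) < (a:ℝ) + b := by exact_mod_cast hab
  have hp0 : 0 ≤ p := by rw [hp]; positivity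
  have hpq0 : 0 < p + q := by linarith
  have h1pq : 0 < 1 - p - q := by linarith
  have h1p : 0 < 1 - p := by linarith
  -- trivial case n = 0
  rcases Nat.eq_zero_or_pos n with rfl | hn0
  · simp
  -- trivial case a = 0
  rcases Nat.eq_zero_or_pos a with rfl | ha0
  · have hp' : p = 0 := by rw [hp]; simp
    subst hp'
    have hL : ∑ k ∈ Finset.range (n + 1),
        (if ((0:ℝ) + q) * n ≤ (k : ℝ) then
          ((Nat.choose 0 k) * b.choose (n - k) : ℝ) / ((0 + b).choose n) else 0) = 0 := by
      refine Finset.sum_eq_zero fun k _ => ?_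
      match k with
      | 0 =>
        rw [if_neg]
        push_neg
        have : (0:ℝ) < n := by exact_mod_cast hn0
        push_cast
        nlinarith
      | (k+1) => simp [Nat.choose_eq_zero_of_lt (Nat.succ_pos k)]
    rw [hL]
    have h0 : ((0:ℝ) / (0 + q)) = 0 := by simp
    positivity
  have hapos : (0:ℝ) < (a:ℝ) := by exact_mod_cast ha0
  have hppos : 0 < p := by rw [hp]; positivity
  have hp1 : p < 1 := by linarith
  set L : ℝ := ((p+q)*(1-p)) / (p*(1-p-q)) with hLdef
  have hL1 : 1 < L := by
    rw [hLdef, lt_div_iff₀ (by positivity)]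
    nlinarith
  have hLpos : 0 < L := lt_trans one_pos hL1
  set r : ℝ := (1-p)/(1-p-q) with hrdef
  have hrpos : 0 < r := by positivity
  have hr : 1 + (L-1)*p = r := by
    rw [hLdef, hrdef]
    field_simp
    ring
  set N : ℝ := ((a+b).choose n : ℝ) with hNdef
  have hNpos : 0 < N := by
    rw [hNdef]
    exact_mod_cast Nat.choose_pos hn
  -- Step 1: pointwise Markov bound
  have step1 : ∀ k ∈ range (n+1),
      (if (p + q) * n ≤ (k : ℝ) then
          (a.choose k * b.choose (n - k) : ℝ) / N else 0)
        ≤ (L ^ ((p+q) * (n:ℝ)))⁻¹ * (L^k * ((a.choose k * b.choose (n - k) : ℝ) / N)) := by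
    intro k _
    have hpowpos : 0 < L ^ ((p+q) * (n:ℝ)) := Real.rpow_pos_of_pos hLpos _
    have hcN : 0 ≤ (a.choose k * b.choose (n - k) : ℝ) / N := by positivity
    split_ifs with h
    · have h2 : L ^ ((p+q) * (n:ℝ)) ≤ L^k := by
        rw [← Real.rpow_natCast L k]
        exact Real.rpow_le_rpow_of_exponent_le hL1.le h
      have h3 : (1:ℝ) ≤ (L ^ ((p+q) * (n:ℝ)))⁻¹ * L^k := by
        rw [inv_mul_eq_div, le_div_iff₀ hpowpos, one_mul]
        exact h2
      calc (a.choose k * b.choose (n - k) : ℝ) / N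
          = 1 * ((a.choose k * b.choose (n - k) : ℝ) / N) := (one_mul _).symm
        _ ≤ ((L ^ ((p+q) * (n:ℝ)))⁻¹ * L^k) * ((a.choose k * b.choose (n - k) : ℝ) / N) :=
            mul_le_mul_of_nonneg_right h3 hcN
        _ = _ := by ring
    · positivity
  -- expand L^k via binomial theorem
  have expand : ∀ k ∈ range (n+1),
      L^k = ∑ j ∈ range (n+1), (L-1)^j * (k.choose j : ℝ) := by
    intro k hk
    have h0 : L ^ k = ((L-1)+1)^k := by norm_num
    rw [h0, add_pow]
    simp only [one_pow, mul_one]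
    refine Finset.sum_subset (Finset.range_subset_range.mpr (by simp at hk; omega)) ?_
    intro x hx hnx
    have : k < x := by simp only [mem_range] at hx hnx; omega
    simp [Nat.choose_eq_zero_of_lt this]
  -- Step 2: moment bound
  have step2 : ∑ k ∈ range (n+1), L^k * (a.choose k * b.choose (n - k) : ℝ)
      ≤ N * (1 + (L-1)*p)^n := by
    calc ∑ k ∈ range (n+1), L^k * (a.choose k * b.choose (n - k) : ℝ)
        = ∑ k ∈ range (n+1), ∑ j ∈ range (n+1),
            (L-1)^j * ((k.choose j : ℝ) * ((a.choose k : ℝ) * (b.choose (n-k) : ℝ))) := by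
          refine Finset.sum_congr rfl fun k hk => ?_
          rw [expand k hk, Finset.sum_mul]
          exact Finset.sum_congr rfl fun j _ => by ring
      _ = ∑ j ∈ range (n+1), (L-1)^j *
            ∑ k ∈ range (n+1), ((k.choose j : ℝ) * ((a.choose k : ℝ) * (b.choose (n-k) : ℝ))) := by
          rw [Finset.sum_comm]
          exact Finset.sum_congr rfl fun j _ => by rw [Finset.mul_sum]
      _ = ∑ j ∈ range (n+1), (L-1)^j *
            ((a.choose j : ℝ) * ((a+b-j).choose (n-j) : ℝ)) := by
          refine Finset.sum_congr rfl fun j hj => ?_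
          congr 1
          have h := hyp_A_nat a b n j (by simp at hj; omega)
          calc ∑ k ∈ range (n+1), ((k.choose j : ℝ) * ((a.choose k : ℝ) * (b.choose (n-k) : ℝ)))
              = ((∑ k ∈ range (n+1), k.choose j * (a.choose k * b.choose (n-k)) : ℕ) : ℝ) := by
                push_cast
                rfl
            _ = _ := by rw [h]; push_cast; rfl
      _ ≤ ∑ j ∈ range (n+1), (L-1)^j * ((n.choose j : ℝ) * p^j * N) := by
          refine Finset.sum_le_sum fun j hj => ?_
          have hj' : j ≤ n := by simp at hj; omega
          refine mul_le_mul_of_nonneg_left ?_ (pow_nonneg (by linarith) j)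
          have hB := hyp_B_nat a b n j hj' hn
          have hBr : ((a.choose j : ℝ) * ((a+b-j).choose (n-j) : ℝ)) * ((a:ℝ)+b)^j
              ≤ (n.choose j : ℝ) * (a:ℝ)^j * N := by
            have := (Nat.cast_le (α := ℝ)).mpr hB
            push_cast at this
            calc ((a.choose j : ℝ) * ((a+b-j).choose (n-j) : ℝ)) * ((a:ℝ)+b)^j
                = (a.choose j : ℝ) * ((a+b-j).choose (n-j) : ℝ) * ((a:ℝ)+(b:ℝ))^j := by ring
              _ ≤ (n.choose j : ℝ) * (a:ℝ)^j * ((a+b).choose n : ℝ) := this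
              _ = (n.choose j : ℝ) * (a:ℝ)^j * N := by rw [hNdef]
          have hppow : p^j = (a:ℝ)^j / ((a:ℝ)+b)^j := by rw [hp, div_pow]
          rw [hppow, show (n.choose j : ℝ) * ((a:ℝ)^j / ((a:ℝ)+(b:ℝ))^j) * N
              = ((n.choose j : ℝ) * (a:ℝ)^j * N) / ((a:ℝ)+b)^j by ring,
            le_div_iff₀ (by positivity)]
          exact hBr
      _ = N * (1 + (L-1)*p)^n := by
          rw [show (1 + (L-1)*p) = ((L-1)*p + 1) by ring, add_pow, Finset.mul_sum]
          exact Finset.sum_congr rfl fun j _ => by rw [mul_pow]; ring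
  -- combine
  have hS : ∑ k ∈ range (n+1), L^k * ((a.choose k * b.choose (n - k) : ℝ) / N) ≤ r^n := by
    calc ∑ k ∈ range (n+1), L^k * ((a.choose k * b.choose (n - k) : ℝ) / N)
        = (∑ k ∈ range (n+1), L^k * (a.choose k * b.choose (n - k) : ℝ)) / N := by
          rw [Finset.sum_div]
          exact Finset.sum_congr rfl fun k _ => by ring
      _ ≤ (N * (1 + (L-1)*p)^n) / N := by
          exact div_le_div_of_nonneg_right step2 hNpos.le
      _ = (1 + (L-1)*p)^n := by field_simp
      _ = r^n := by rw [hr]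
  have main : ∑ k ∈ Finset.range (n + 1),
        (if (p + q) * n ≤ (k : ℝ) then
          (a.choose k * b.choose (n - k) : ℝ) / N else 0)
      ≤ (L ^ ((p+q) * (n:ℝ)))⁻¹ * r^n := by
    calc ∑ k ∈ Finset.range (n + 1),
          (if (p + q) * n ≤ (k : ℝ) then (a.choose k * b.choose (n - k) : ℝ) / N else 0)
        ≤ ∑ k ∈ range (n+1),
            (L ^ ((p+q) * (n:ℝ)))⁻¹ * (L^k * ((a.choose k * b.choose (n - k) : ℝ) / N)) :=
          Finset.sum_le_sum step1
      _ = (L ^ ((p+q) * (n:ℝ)))⁻¹ *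
            ∑ k ∈ range (n+1), L^k * ((a.choose k * b.choose (n - k) : ℝ) / N) := by
          rw [Finset.mul_sum]
      _ ≤ (L ^ ((p+q) * (n:ℝ)))⁻¹ * r^n :=
          mul_le_mul_of_nonneg_left hS (inv_nonneg.mpr (Real.rpow_pos_of_pos hLpos _).le)
  refine main.trans_eq ?_
  -- equality of the bound with the stated RHS
  have hx : L ^ ((p+q) * (n:ℝ)) = (L ^ (p+q))^n := by
    rw [Real.rpow_mul hLpos.le, Real.rpow_natCast]
  have h2 : (p/(p+q)) * L = r := by
    rw [hLdef, hrdef]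
    field_simp
  have hXr : ((p / (p + q)) ^ (p + q) * r ^ (1 - p - q)) * L^(p+q) = r := by
    calc ((p / (p + q)) ^ (p + q) * r ^ (1 - p - q)) * L^(p+q)
        = ((p / (p + q)) ^ (p + q) * L^(p+q)) * r ^ (1 - p - q) := by ring
      _ = ((p/(p+q)) * L)^(p+q) * r ^ (1 - p - q) := by
          rw [← Real.mul_rpow (by positivity) hLpos.le]
      _ = r^(p+q) * r^(1-p-q) := by rw [h2]
      _ = r^((p+q)+(1-p-q)) := (Real.rpow_add hrpos _ _).symm
      _ = r := by rw [show (p+q)+(1-p-q) = 1 by ring, Real.rpow_one]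
  have hLp : (0:ℝ) < L^(p+q) := Real.rpow_pos_of_pos hLpos _
  have hX : (p / (p + q)) ^ (p + q) * r ^ (1 - p - q) = r / L^(p+q) :=
    eq_div_iff hLp.ne' |>.mpr hXr
  rw [hx]
  calc ((L ^ (p+q))^n)⁻¹ * r^n = (r / L^(p+q))^n := by rw [inv_mul_eq_div, ← div_pow]
    _ = ((p / (p + q)) ^ (p + q) * r ^ (1 - p - q)) ^ n := by rw [hX]
end

section
/- Let c_1, ..., c_N be real numbers, let X_1, ..., X_n be a sample of size n ≤ N drawn without replacement (i.e., (X_1,...,X_n) = (c_{σ(1)},...,c_{σ(n)}) for a uniformly random permutation σ of {1,...,N}), and let Y_1, ..., Y_n be i.i.d. uniform over {c_1,...,c_N} (with multiplicity). Then for every convex function f : ℝ → ℝ, E[f(X_1 + ... + X_n)] ≤ E[f(Y_1 + ... + Y_n)]. -/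
open Finset

section FirstOccurrence

variable {n : ℕ} {α β : Type*} [DecidableEq α] [DecidableEq β]

/-- The index of the first occurrence of the value `w i` in the tuple `w`. -/
def fo (w : Fin n → α) (i : Fin n) : Fin n :=
  (Finset.univ.filter fun j => w j = w i).min' ⟨i, by simp⟩

lemma min'_congr {γ : Type*} [LinearOrder γ] (s t : Finset γ) (hs : s.Nonempty)
    (ht : t.Nonempty) (h : s = t) : s.min' hs = t.min' ht := by subst h; rfl

lemma fo_spec (w : Fin n → α) (i : Fin n) : w (fo w i) = w i := by
  have := Finset.min'_mem (Finset.univ.filter fun j => w j = w i) ⟨i, by simp⟩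
  simpa [fo, Finset.mem_filter] using this

lemma fo_pattern_congr {w : Fin n → α} {u : Fin n → β}
    (h : ∀ i j, w i = w j ↔ u i = u j) : fo w = fo u := by
  funext i
  exact min'_congr _ _ _ _ (by ext j; simp [h j i])

lemma fo_eq_iff {w : Fin n → α} {i j : Fin n} : fo w i = fo w j ↔ w i = w j := by
  constructor
  · intro h
    calc w i = w (fo w i) := (fo_spec w i).symm
      _ = w (fo w j) := by rw [h]
      _ = w j := fo_spec w j
  · intro h
    exact min'_congr _ _ _ _ (by ext k; simp [h])

lemma fo_image_fix {w : Fin n → α} {s : Fin n} (hs : s ∈ Finset.univ.image (fo w)) :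
    fo w s = s := by
  obtain ⟨i, -, rfl⟩ := Finset.mem_image.mp hs
  exact fo_eq_iff.mpr (fo_spec w i)

end FirstOccurrence

section PermCount

/-- Number of permutations extending a given partial injection: `(|α| - |S|)!`. -/
lemma card_perm_extend {α γ : Type*} [Fintype α] [DecidableEq α] [DecidableEq γ]
    (S : Finset γ) (e v : γ → α) (he : Set.InjOn e S) (hv : Set.InjOn v S) :
    Nat.card {σ : Equiv.Perm α // ∀ s ∈ S, σ (e s) = v s}
      = (Nat.card α - S.card).factorial := by
  classical
  set B := S.image e with hB
  set T := S.image v with hT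
  have hψb : Function.Bijective (fun s : {x // x ∈ S} =>
      (⟨e s.1, Finset.mem_image_of_mem e s.2⟩ : {x // x ∈ B})) := by
    constructor
    · intro s t hst
      exact Subtype.ext (he s.2 t.2 (congrArg Subtype.val hst))
    · rintro ⟨b, hb⟩
      obtain ⟨s, hs, rfl⟩ := Finset.mem_image.mp hb
      exact ⟨⟨s, hs⟩, rfl⟩
  have hφb : Function.Bijective (fun s : {x // x ∈ S} =>
      (⟨v s.1, Finset.mem_image_of_mem v s.2⟩ : {x // x ∈ T})) := by
    constructor
    · intro s t hst
      exact Subtype.ext (hv s.2 t.2 (congrArg Subtype.val hst))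
    · rintro ⟨b, hb⟩
      obtain ⟨s, hs, rfl⟩ := Finset.mem_image.mp hb
      exact ⟨⟨s, hs⟩, rfl⟩
  set ψ := Equiv.ofBijective _ hψb with hψ
  set φ := Equiv.ofBijective _ hφb with hφ
  set eqv : {x // x ∈ B} ≃ {x // x ∈ T} := ψ.symm.trans φ with heqv
  set π₀ : Equiv.Perm α := eqv.extendSubtype with hπ₀def
  have hπ₀ : ∀ s ∈ S, π₀ (e s) = v s := by
    intro s hs
    have h1 : π₀ (e s) = (eqv ⟨e s, Finset.mem_image_of_mem e hs⟩ : α) :=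
      Equiv.extendSubtype_apply_of_mem eqv _ (Finset.mem_image_of_mem e hs)
    have h2 : ψ.symm ⟨e s, Finset.mem_image_of_mem e hs⟩ = ⟨s, hs⟩ := by
      apply ψ.injective; simp [hψ]
    rw [h1, heqv]
    simp only [Equiv.trans_apply, h2]
    simp [hφ, Equiv.ofBijective_apply]
  have E1 : {σ : Equiv.Perm α // ∀ s ∈ S, σ (e s) = v s}
      ≃ {σ : Equiv.Perm α // ∀ s ∈ S, σ (e s) = e s} := by
    refine Equiv.subtypeEquiv (Equiv.mulLeft π₀⁻¹) fun σ => ?_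
    constructor
    · intro h s hs
      have : π₀⁻¹ (σ (e s)) = π₀⁻¹ (v s) := congrArg _ (h s hs)
      simpa [Equiv.Perm.mul_apply, ← hπ₀ s hs] using this
    · intro h s hs
      have := h s hs
      change π₀⁻¹ (σ (e s)) = e s at this
      have := congrArg π₀ this
      simpa [hπ₀ s hs] using this
  have E2 : {σ : Equiv.Perm α // ∀ s ∈ S, σ (e s) = e s}
      ≃ {σ : Equiv.Perm α // ∀ x, ¬ (x ∉ B) → σ x = x} := by
    refine Equiv.subtypeEquivRight fun σ => ?_
    constructor
    · intro h x hx
      rw [not_not] at hx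
      obtain ⟨s, hs, rfl⟩ := Finset.mem_image.mp hx
      exact h s hs
    · intro h s hs
      exact h (e s) (not_not_intro (Finset.mem_image_of_mem e hs))
  have E3 : Equiv.Perm {x : α // x ∉ B} ≃ {σ : Equiv.Perm α // ∀ x, ¬ (x ∉ B) → σ x = x} :=
    Equiv.Perm.subtypeEquivSubtypePerm _
  rw [Nat.card_congr (E1.trans (E2.trans E3.symm)), Nat.card_eq_fintype_card,
    Fintype.card_perm, Nat.card_eq_fintype_card]
  congr 1
  rw [Fintype.card_subtype_compl, Fintype.card_coe, hB, Finset.card_image_of_injOn he]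

end PermCount

section PermSum

lemma sum_perm_apply_succ {m : ℕ} (G : Fin (m + 1) → ℝ) (a : Fin (m + 1)) :
    ∑ τ : Equiv.Perm (Fin (m + 1)), G (τ a) = m.factorial • ∑ b, G b := by
  have h1 : ∑ τ : Equiv.Perm (Fin (m + 1)), G (τ a)
      = ∑ τ : Equiv.Perm (Fin (m + 1)), G (τ 0) := by
    refine Fintype.sum_bijective (· * Equiv.swap 0 a)
      (Equiv.mulRight (Equiv.swap 0 a)).bijective _ _ fun τ => ?_
    simp [Equiv.Perm.mul_apply]
  rw [h1, ← Equiv.sum_comp Equiv.Perm.decomposeFin.symm (fun τ => G (τ 0)),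
    Fintype.sum_prod_type]
  simp only [Equiv.Perm.decomposeFin_symm_apply_zero, Finset.sum_const, Finset.card_univ,
    Fintype.card_perm, Fintype.card_fin, Finset.smul_sum]

lemma sum_perm_comp {n : ℕ} (G : Fin n → ℝ) (ρ : Fin n → Fin n) :
    ∑ τ : Equiv.Perm (Fin n), ∑ i, G (τ (ρ i)) = (n.factorial : ℝ) * ∑ b, G b := by
  cases n with
  | zero => simp
  | succ m =>
    rw [Finset.sum_comm]
    have : ∀ i : Fin (m + 1), ∑ τ : Equiv.Perm (Fin (m + 1)), G (τ (ρ i))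
        = m.factorial • ∑ b, G b := fun i => sum_perm_apply_succ G (ρ i)
    rw [Finset.sum_congr rfl fun i _ => this i, Finset.sum_const, Finset.card_univ,
      Fintype.card_fin, smul_smul, nsmul_eq_mul, Nat.factorial_succ]

end PermSum

section FiberCount

/-- The number of tuples with a prescribed first-occurrence pattern. -/
lemma card_fo_fiber {n N : ℕ} (g₀ : Fin n → Fin N) :
    Nat.card {w : Fin n → Fin N // fo w = fo g₀}
      = N.descFactorial ((Finset.univ.image (fo g₀)).card) := by
  classical
  set S := Finset.univ.image (fo g₀) with hS
  have key : {w : Fin n → Fin N // fo w = fo g₀} ≃ ({x // x ∈ S} ↪ Fin N) := by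
    refine
      { toFun := fun w => ⟨fun s => w.1 s.1, ?_⟩
        invFun := fun v => ⟨fun i => v ⟨fo g₀ i, Finset.mem_image_of_mem _ (Finset.mem_univ i)⟩, ?_⟩
        left_inv := ?_, right_inv := ?_ }
    · intro s t hst
      have h1 : fo w.1 s.1 = fo w.1 t.1 := fo_eq_iff.mpr hst
      rw [w.2] at h1
      exact Subtype.ext ((fo_image_fix s.2).symm.trans (h1.trans (fo_image_fix t.2)))
    · refine fo_pattern_congr fun i j => ?_
      constructor
      · intro h
        have := v.injective h
        have h2 : fo g₀ i = fo g₀ j := congrArg Subtype.val this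
        exact fo_eq_iff.mp h2
      · intro h
        have h2 : fo g₀ i = fo g₀ j := fo_eq_iff.mpr h
        congr 1
        exact Subtype.ext h2
    · rintro ⟨w, hw⟩
      apply Subtype.ext
      funext i
      show w (fo g₀ i) = w i
      rw [← hw]
      exact fo_spec w i
    · intro v
      ext s
      simp only [Function.Embedding.coeFn_mk]
      have hss : (⟨fo g₀ s.1, Finset.mem_image_of_mem _ (Finset.mem_univ s.1)⟩ : {x // x ∈ S}) = s :=
        Subtype.ext (fo_image_fix s.2)
      exact congrArg (fun x => ((v x : Fin N) : ℕ)) hss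
  rw [Nat.card_congr key, Nat.card_eq_fintype_card, Fintype.card_embedding_eq,
    Fintype.card_fin, Fintype.card_coe]

end FiberCount

/-- Hoeffding's theorem: sampling without replacement is dominated in the convex order by
sampling with replacement.  The expectation over a uniformly random permutation `σ` of the
population of `f(c_{σ(1)} + ⋯ + c_{σ(n)})` is at most the expectation over `n` i.i.d.
uniform picks `g` of `f(c_{g(1)} + ⋯ + c_{g(n)})`, for every convex `f`. -/
theorem hoeffding_sampling_convex_order (N n : ℕ) (hn : n ≤ N) (c : Fin N → ℝ)
    (f : ℝ → ℝ) (hf : ConvexOn ℝ Set.univ f) :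
    (N.factorial : ℝ)⁻¹ *
        ∑ σ : Equiv.Perm (Fin N), f (∑ i : Fin n, c (σ (Fin.castLE hn i)))
      ≤ ((N : ℝ) ^ n)⁻¹ * ∑ g : Fin n → Fin N, f (∑ i : Fin n, c (g i)) := by
  have hfact : (0 : ℝ) < (n.factorial : ℝ) := by positivity
  have hNfact : (0 : ℝ) < (N.factorial : ℝ) := by positivity
  have hNpow : (0 : ℝ) < (N : ℝ) ^ n := by
    rcases Nat.eq_zero_or_pos N with h | h
    · subst h
      interval_cases n
      norm_num
    · positivity
  set F : (Fin n → Fin N) → ℝ := fun g => f (∑ i, c (g i)) with hF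
  set Θ : Equiv.Perm (Fin N) → Equiv.Perm (Fin n) → (Fin n → Fin N) → (Fin n → Fin N) :=
    fun σ τ w => fun i => σ (Fin.castLE hn (τ (fo w i))) with hΘ
  -- Step A: Jensen's inequality for the randomization over τ
  have stepA : ∀ (σ : Equiv.Perm (Fin N)) (w : Fin n → Fin N),
      f (∑ i, c (σ (Fin.castLE hn i)))
        ≤ (n.factorial : ℝ)⁻¹ * ∑ τ : Equiv.Perm (Fin n), F (Θ σ τ w) := by
    intro σ w
    have havg : (n.factorial : ℝ)⁻¹ *
        ∑ τ : Equiv.Perm (Fin n), (∑ i, c (σ (Fin.castLE hn (τ (fo w i)))))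
          = ∑ i, c (σ (Fin.castLE hn i)) := by
      rw [sum_perm_comp (fun b => c (σ (Fin.castLE hn b))) (fo w), ← mul_assoc,
        inv_mul_cancel₀ (ne_of_gt hfact), one_mul]
    have hJ := hf.map_sum_le (t := Finset.univ)
      (w := fun _ : Equiv.Perm (Fin n) => (n.factorial : ℝ)⁻¹)
      (p := fun τ => ∑ i, c (σ (Fin.castLE hn (τ (fo w i)))))
      (fun _ _ => by positivity)
      (by rw [Finset.sum_const, Finset.card_univ, Fintype.card_perm, Fintype.card_fin,
        nsmul_eq_mul, mul_inv_cancel₀ (ne_of_gt hfact)])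
      (fun _ _ => Set.mem_univ _)
    calc f (∑ i, c (σ (Fin.castLE hn i)))
        = f (∑ τ : Equiv.Perm (Fin n),
            (n.factorial : ℝ)⁻¹ • (∑ i, c (σ (Fin.castLE hn (τ (fo w i)))))) := by
          rw [← Finset.smul_sum, smul_eq_mul, havg]
      _ ≤ ∑ τ : Equiv.Perm (Fin n),
            (n.factorial : ℝ)⁻¹ • f (∑ i, c (σ (Fin.castLE hn (τ (fo w i))))) := hJ
      _ = (n.factorial : ℝ)⁻¹ * ∑ τ : Equiv.Perm (Fin n), F (Θ σ τ w) := by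
          rw [← Finset.smul_sum, smul_eq_mul]
  -- Step B: for each fixed τ, the marginal of the randomization is uniform
  have stepB : ∀ τ : Equiv.Perm (Fin n),
      ∑ σ : Equiv.Perm (Fin N), ∑ w : Fin n → Fin N, F (Θ σ τ w)
        = (N.factorial : ℝ) * ∑ g : Fin n → Fin N, F g := by
    intro τ
    set e : Fin n → Fin N := fun j => Fin.castLE hn (τ j) with he
    have heinj : Function.Injective e := fun a b hab =>
      τ.injective (Fin.castLE_injective hn hab)
    set Θ' : Equiv.Perm (Fin N) × (Fin n → Fin N) → (Fin n → Fin N) :=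
      fun p => Θ p.1 τ p.2 with hΘ'
    have hcard : ∀ g₀ : Fin n → Fin N,
        Nat.card {p : Equiv.Perm (Fin N) × (Fin n → Fin N) // Θ' p = g₀}
          = N.factorial := by
      intro g₀
      set S := Finset.univ.image (fo g₀) with hS
      have hiff : ∀ p : Equiv.Perm (Fin N) × (Fin n → Fin N),
          Θ' p = g₀ ↔ (∀ s ∈ S, p.1 (e s) = g₀ s) ∧ fo p.2 = fo g₀ := by
        rintro ⟨σ, w⟩
        constructor
        · intro h
          have hΘi : ∀ i, σ (e (fo w i)) = g₀ i := fun i => congrFun h i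
          have hwpat : fo w = fo g₀ := by
            refine fo_pattern_congr fun i j => ?_
            constructor
            · intro hij
              have : fo w i = fo w j := fo_eq_iff.mpr hij
              rw [← hΘi i, ← hΘi j, this]
            · intro hij
              have : σ (e (fo w i)) = σ (e (fo w j)) := by rw [hΘi i, hΘi j, hij]
              exact fo_eq_iff.mp (heinj (σ.injective this))
          refine ⟨?_, hwpat⟩
          intro s hs
          obtain ⟨i, -, rfl⟩ := Finset.mem_image.mp hs
          have h5 : g₀ (fo g₀ i) = g₀ i := fo_spec g₀ i
          rw [h5, ← hwpat, hΘi i]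
        · rintro ⟨hσ, hw⟩
          funext i
          show σ (e (fo w i)) = g₀ i
          rw [hw, hσ (fo g₀ i) (Finset.mem_image_of_mem _ (Finset.mem_univ i))]
          exact fo_spec g₀ i
      have hEq : {p : Equiv.Perm (Fin N) × (Fin n → Fin N) // Θ' p = g₀}
          ≃ {σ : Equiv.Perm (Fin N) // ∀ s ∈ S, σ (e s) = g₀ s}
            × {w : Fin n → Fin N // fo w = fo g₀} := by
        refine
          { toFun := fun p => ⟨⟨p.1.1, ((hiff p.1).mp p.2).1⟩, ⟨p.1.2, ((hiff p.1).mp p.2).2⟩⟩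
            invFun := fun q => ⟨(q.1.1, q.2.1), (hiff _).mpr ⟨q.1.2, q.2.2⟩⟩
            left_inv := fun p => rfl
            right_inv := fun q => rfl }
      rw [Nat.card_congr hEq, Nat.card_prod, card_fo_fiber g₀]
      have hg₀inj : Set.InjOn g₀ S := by
        intro s hs t ht hst
        have : fo g₀ s = fo g₀ t := fo_eq_iff.mpr hst
        rw [fo_image_fix hs, fo_image_fix ht] at this
        exact this
      rw [card_perm_extend S e g₀ (heinj.injOn) hg₀inj, Nat.card_eq_fintype_card,
        Fintype.card_fin]
      have hkN : S.card ≤ N := le_trans (le_trans (Finset.card_le_univ S) (by simp)) hn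
      exact Nat.factorial_mul_descFactorial hkN
    calc ∑ σ : Equiv.Perm (Fin N), ∑ w : Fin n → Fin N, F (Θ σ τ w)
        = ∑ p : Equiv.Perm (Fin N) × (Fin n → Fin N), F (Θ' p) := by
          rw [Fintype.sum_prod_type]
      _ = ∑ g₀ : Fin n → Fin N,
            ∑ p : {p : Equiv.Perm (Fin N) × (Fin n → Fin N) // Θ' p = g₀}, F (Θ' p.1) :=
          (Fintype.sum_fiberwise Θ' (fun p => F (Θ' p))).symm
      _ = ∑ g₀ : Fin n → Fin N, (N.factorial : ℝ) * F g₀ := by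
          refine Finset.sum_congr rfl fun g₀ _ => ?_
          have : ∀ p : {p : Equiv.Perm (Fin N) × (Fin n → Fin N) // Θ' p = g₀},
              F (Θ' p.1) = F g₀ := fun p => by rw [p.2]
          rw [Finset.sum_congr rfl fun p _ => this p, Finset.sum_const, Finset.card_univ,
            ← Nat.card_eq_fintype_card, hcard g₀, nsmul_eq_mul]
      _ = (N.factorial : ℝ) * ∑ g : Fin n → Fin N, F g := by rw [← Finset.mul_sum]
  -- Assemble
  have h1 : (N : ℝ) ^ n * ∑ σ : Equiv.Perm (Fin N), f (∑ i : Fin n, c (σ (Fin.castLE hn i)))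
      = ∑ w : Fin n → Fin N, ∑ σ : Equiv.Perm (Fin N),
          f (∑ i : Fin n, c (σ (Fin.castLE hn i))) := by
    rw [Finset.sum_const, Finset.card_univ, Fintype.card_fun, Fintype.card_fin,
      Fintype.card_fin, nsmul_eq_mul]
    push_cast
    ring
  have h2 : ∑ w : Fin n → Fin N, ∑ σ : Equiv.Perm (Fin N),
        f (∑ i : Fin n, c (σ (Fin.castLE hn i)))
      ≤ ∑ w : Fin n → Fin N, ∑ σ : Equiv.Perm (Fin N),
          (n.factorial : ℝ)⁻¹ * ∑ τ : Equiv.Perm (Fin n), F (Θ σ τ w) :=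
    Finset.sum_le_sum fun w _ => Finset.sum_le_sum fun σ _ => stepA σ w
  have swap1 : ∑ w : Fin n → Fin N, ∑ σ : Equiv.Perm (Fin N),
        ∑ τ : Equiv.Perm (Fin n), F (Θ σ τ w)
      = ∑ τ : Equiv.Perm (Fin n), ∑ σ : Equiv.Perm (Fin N),
          ∑ w : Fin n → Fin N, F (Θ σ τ w) :=
    calc ∑ w : Fin n → Fin N, ∑ σ : Equiv.Perm (Fin N),
          ∑ τ : Equiv.Perm (Fin n), F (Θ σ τ w)
        = ∑ w : Fin n → Fin N, ∑ τ : Equiv.Perm (Fin n),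
            ∑ σ : Equiv.Perm (Fin N), F (Θ σ τ w) :=
          Finset.sum_congr rfl fun w _ => Finset.sum_comm
      _ = ∑ τ : Equiv.Perm (Fin n), ∑ w : Fin n → Fin N,
            ∑ σ : Equiv.Perm (Fin N), F (Θ σ τ w) := Finset.sum_comm
      _ = ∑ τ : Equiv.Perm (Fin n), ∑ σ : Equiv.Perm (Fin N),
            ∑ w : Fin n → Fin N, F (Θ σ τ w) :=
          Finset.sum_congr rfl fun τ _ => Finset.sum_comm
  have h3 : ∑ w : Fin n → Fin N, ∑ σ : Equiv.Perm (Fin N),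
        (n.factorial : ℝ)⁻¹ * ∑ τ : Equiv.Perm (Fin n), F (Θ σ τ w)
      = (n.factorial : ℝ)⁻¹ * ∑ τ : Equiv.Perm (Fin n),
          ∑ σ : Equiv.Perm (Fin N), ∑ w : Fin n → Fin N, F (Θ σ τ w) := by
    rw [← swap1, Finset.mul_sum]
    refine Finset.sum_congr rfl fun w _ => ?_
    rw [Finset.mul_sum]
  have h4 : (n.factorial : ℝ)⁻¹ *
        ∑ τ : Equiv.Perm (Fin n), ∑ σ : Equiv.Perm (Fin N),
          ∑ w : Fin n → Fin N, F (Θ σ τ w)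
      = (N.factorial : ℝ) * ∑ g : Fin n → Fin N, F g := by
    rw [Finset.sum_congr rfl fun τ _ => stepB τ, Finset.sum_const, Finset.card_univ,
      Fintype.card_perm, Fintype.card_fin, nsmul_eq_mul, ← mul_assoc, ← mul_assoc,
      inv_mul_cancel₀ (ne_of_gt hfact), one_mul]
  have main : (N : ℝ) ^ n * ∑ σ : Equiv.Perm (Fin N), f (∑ i : Fin n, c (σ (Fin.castLE hn i)))
      ≤ (N.factorial : ℝ) * ∑ g : Fin n → Fin N, F g := by
    rw [h1]
    exact h2.trans_eq (h3.trans h4)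
  have hgoal : ((N : ℝ) ^ n)⁻¹ * ∑ g : Fin n → Fin N, f (∑ i : Fin n, c (g i))
      = ((N : ℝ) ^ n)⁻¹ * ∑ g : Fin n → Fin N, F g := rfl
  rw [hgoal, inv_mul_eq_div, inv_mul_eq_div, div_le_div_iff₀ hNfact hNpow]
  nlinarith [main]
end

section
/- There exists a coupling of a sequence η(1), η(2), ... of i.i.d. uniform random variables on {1,...,N} with a uniformly random permutation ξ of {1,...,N} such that ξ(i) equals the i-th distinct value appearing in the sequence η. Moreover, under this coupling, for each n the values η(1),...,η(n) all lie in {ξ(1),...,ξ(n)}. -/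
open MeasureTheory ENNReal

/-- `firstDistinct g i` is the `i`-th distinct value appearing in the sequence `g`:
the value of `g` at the `i`-th position where a previously unseen value appears. -/
noncomputable def firstDistinct (g : ℕ → ℕ) (i : ℕ) : ℕ :=
  g (Nat.nth (fun j => ∀ k < j, g k ≠ g j) i)


section FDCAux
open Finset Set

namespace FDC

variable {N : ℕ}


/-- sum of digits is less than b^m -/
theorem sum_digits_lt {b : ℕ} (hb : 0 < b) (m : ℕ) (u : ℕ → ℕ) (hu : ∀ j < m, u j < b) :
    (∑ j ∈ range m, u j * b ^ j) < b ^ m := by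
  induction m with
  | zero => simpa using hb
  | succ m ih =>
    rw [Finset.sum_range_succ]
    have h1 : (∑ j ∈ range m, u j * b ^ j) < b ^ m := ih (fun j hj => hu j (by omega))
    have h2 : u m * b ^ m ≤ (b - 1) * b ^ m :=
      Nat.mul_le_mul_right _ (by have := hu m (by omega); omega)
    have h3 : b ^ m + (b - 1) * b ^ m = b ^ (m + 1) := by
      obtain ⟨c, rfl⟩ : ∃ c, b = c + 1 := ⟨b - 1, by omega⟩
      simp only [Nat.add_sub_cancel]
      ring
    omega

/-- digits of a digit sum -/
theorem digit_sum_digits {b : ℕ} (hb : 0 < b) (m : ℕ) (u : ℕ → ℕ) (hu : ∀ j < m, u j < b) :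
    ∀ i < m, (∑ j ∈ range m, u j * b ^ j) / b ^ i % b = u i := by
  induction m generalizing u with
  | zero => omega
  | succ m ih =>
    have hS : (∑ j ∈ range (m+1), u j * b ^ j) = u 0 + b * ∑ j ∈ range m, u (j+1) * b ^ j := by
      rw [Finset.sum_range_succ' (fun j => u j * b ^ j)]
      rw [Finset.mul_sum]
      simp only [pow_zero, mul_one, pow_succ]
      rw [add_comm]
      congr 1
      exact Finset.sum_congr rfl (fun j _ => by ring)
    intro i hi
    rw [hS]
    match i with
    | 0 =>
      simp only [pow_zero, Nat.div_one]
      rw [Nat.add_mul_mod_self_left, Nat.mod_eq_of_lt (hu 0 (by omega))]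
    | i + 1 =>
      have hdiv : (u 0 + b * ∑ j ∈ range m, u (j+1) * b ^ j) / b = ∑ j ∈ range m, u (j+1) * b ^ j := by
        rw [Nat.add_mul_div_left _ _ hb, Nat.div_eq_of_lt (hu 0 (by omega)), Nat.zero_add]
      rw [pow_succ', ← Nat.div_div_eq_div_mul, hdiv]
      exact ih (fun j => u (j+1)) (fun j hj => hu (j+1) (by omega)) i (by omega)



theorem eq_sum_digits {b : ℕ} (hb : 0 < b) (m : ℕ) : ∀ K < b ^ m,
    K = ∑ j ∈ range m, (K / b ^ j % b) * b ^ j := by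
  induction m with
  | zero => intro K hK; simp at hK ⊢; omega
  | succ m ih =>
    intro K hK
    have hKb : K / b < b ^ m := by
      rw [Nat.div_lt_iff_lt_mul hb]; rw [pow_succ] at hK; exact hK
    have hrec := ih (K / b) hKb
    rw [Finset.sum_range_succ' (fun j => (K / b ^ j % b) * b ^ j)]
    simp only [pow_zero, Nat.div_one, mul_one]
    have hterm : ∀ j, (K / b ^ (j+1) % b) * b ^ (j+1) = b * ((K / b / b ^ j % b) * b ^ j) := by
      intro j
      rw [pow_succ', ← Nat.div_div_eq_div_mul]
      ring
    calc K = K % b + b * (K / b) := by rw [Nat.mod_add_div]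
    _ = K % b + b * (∑ j ∈ range m, (K / b / b ^ j % b) * b ^ j) := by rw [← hrec]
    _ = ∑ j ∈ range m, (K / b ^ (j+1) % b) * b ^ (j+1) + K % b := by
        rw [Finset.mul_sum, add_comm]
        congr 1
        exact Finset.sum_congr rfl (fun j _ => (hterm j).symm)



/-- the `i`-th base-`N` digit of `ω ∈ [0,1)` -/
noncomputable def dig (N : ℕ) (i : ℕ) (ω : ℝ) : ℕ := ⌊ω * (N : ℝ) ^ (i + 1)⌋₊ % N

noncomputable def eta (hN : 0 < N) (i : ℕ) (ω : ℝ) : Fin N := ⟨dig N i ω, Nat.mod_lt _ hN⟩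

theorem measurable_eta (hN : 0 < N) (i : ℕ) : Measurable (eta hN i) := by
  have h1 : Measurable fun ω : ℝ => ⌊ω * (N : ℝ) ^ (i + 1)⌋₊ :=
    (measurable_id.mul_const _).nat_floor
  exact (measurable_from_top (f := fun K : ℕ => (⟨K % N, Nat.mod_lt _ hN⟩ : Fin N))).comp h1

/-- the key digit formula: digits of `ω` are base-`N` digits of `⌊ω * N^m⌋₊`. -/
theorem dig_eq (hN : 0 < N) {m i : ℕ} (hi : i < m) (ω : ℝ) :
    dig N i ω = ⌊ω * (N : ℝ) ^ m⌋₊ / N ^ (m - 1 - i) % N := by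
  have hc : (i + 1) + (m - 1 - i) = m := by omega
  have h1 : ω * (N : ℝ) ^ (i + 1) = ω * (N : ℝ) ^ m / ((N ^ (m - 1 - i) : ℕ) : ℝ) := by
    push_cast
    rw [← hc, pow_add]
    rw [show i + 1 + (m - 1 - i) - 1 - i = m - 1 - i from by omega]
    have : ((N : ℝ)) ^ (m - 1 - i) ≠ 0 := by positivity
    field_simp
    ring
  rw [dig, h1, Nat.floor_div_natCast]

theorem floor_lt_of_mem_Ico (hN : 0 < N) (m : ℕ) {ω : ℝ} (hω : ω ∈ Ico (0:ℝ) 1) :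
    ⌊ω * (N : ℝ) ^ m⌋₊ < N ^ m := by
  have hb : (0:ℝ) < (N : ℝ) ^ m := by positivity
  have : ω * (N : ℝ) ^ m < ((N ^ m : ℕ) : ℝ) := by
    push_cast; nlinarith [hω.1, hω.2]
  exact Nat.floor_lt (by nlinarith [hω.1]) |>.mpr this


/-- big-endian digit word as a little-endian coefficient function -/
noncomputable def dw (m : ℕ) (w : Fin m → Fin N) (j : ℕ) : ℕ :=
  if h : m - 1 - j < m then (w ⟨m - 1 - j, h⟩ : ℕ) else 0

theorem dw_lt (hN : 0 < N) (m : ℕ) (w : Fin m → Fin N) (j : ℕ) : dw m w j < N := by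
  unfold dw; split
  · exact (w _).2
  · exact hN

theorem dw_rev (m : ℕ) (w : Fin m → Fin N) (i : Fin m) :
    dw m w (m - 1 - (i : ℕ)) = (w i : ℕ) := by
  have hi := i.2
  unfold dw
  have h : m - 1 - (m - 1 - (i : ℕ)) < m := by omega
  rw [dif_pos h]
  have he : (⟨m - 1 - (m - 1 - (i:ℕ)), h⟩ : Fin m) = i := Fin.ext (by simp only [Fin.val_mk]; omega)
  rw [he]

theorem cylinder_eq_Ico (hN : 0 < N) (m : ℕ) (w : Fin m → Fin N) :
    {ω : ℝ | ∀ i : Fin m, eta hN i ω = w i} ∩ Ico (0:ℝ) 1 =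
      Ico (((∑ j ∈ range m, dw m w j * N ^ j : ℕ) : ℝ) / (N : ℝ) ^ m)
          ((((∑ j ∈ range m, dw m w j * N ^ j : ℕ) : ℝ) + 1) / (N : ℝ) ^ m) := by
  set k : ℕ := ∑ j ∈ range m, dw m w j * N ^ j with hk
  have hklt : k < N ^ m := sum_digits_lt hN m _ (fun j _ => dw_lt hN m w j)
  have hbm : (0:ℝ) < (N : ℝ) ^ m := by positivity
  ext ω
  simp only [Set.mem_inter_iff, Set.mem_setOf_eq, Set.mem_Ico]
  constructor
  · rintro ⟨hdig, hω0, hω1⟩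
    set K : ℕ := ⌊ω * (N : ℝ) ^ m⌋₊ with hK
    have hKlt : K < N ^ m := floor_lt_of_mem_Ico hN m ⟨hω0, hω1⟩
    have hKeq : K = k := by
      rw [eq_sum_digits hN m K hKlt, hk]
      refine Finset.sum_congr rfl (fun j hj => ?_)
      have hjm : j < m := Finset.mem_range.mp hj
      have hi : m - 1 - j < m := by omega
      have h1 : K / N ^ j % N = dig N (m - 1 - j) ω := by
        rw [dig_eq hN hi ω, ← hK, show m - 1 - (m - 1 - j) = j from by omega]
      have h2 : dig N (m - 1 - j) ω = dw m w j := by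
        have hv : dig N (m - 1 - j) ω = (w ⟨m - 1 - j, hi⟩ : ℕ) :=
          congrArg Fin.val (hdig ⟨m - 1 - j, hi⟩)
        have h3 := dw_rev m w ⟨m - 1 - j, hi⟩
        simp only [Fin.val_mk] at h3
        rw [show m - 1 - (m - 1 - j) = j from by omega] at h3
        rw [hv, ← h3]
      rw [h1, h2]
    have hfloor : (K : ℝ) ≤ ω * (N : ℝ) ^ m ∧ ω * (N : ℝ) ^ m < K + 1 :=
      ⟨Nat.floor_le (by positivity), Nat.lt_floor_add_one _⟩
    rw [hKeq] at hfloor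
    constructor
    · rw [div_le_iff₀ hbm]; linarith [hfloor.1]
    · rw [lt_div_iff₀ hbm]; linarith [hfloor.2]
  · rintro ⟨h1, h2⟩
    have hω0 : (0:ℝ) ≤ ω := le_trans (by positivity) h1
    have hω1 : ω < 1 := by
      have : ((k:ℝ) + 1) / (N:ℝ)^m ≤ 1 := by
        rw [div_le_one hbm]
        have : (k:ℝ) + 1 ≤ ((N ^ m : ℕ) : ℝ) := by exact_mod_cast hklt
        push_cast at this ⊢; linarith
      linarith
    have hfloor : ⌊ω * (N : ℝ) ^ m⌋₊ = k := by
      rw [Nat.floor_eq_iff (by positivity)]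
      constructor
      · calc (k:ℝ) = (k:ℝ)/(N:ℝ)^m * (N:ℝ)^m := by field_simp
        _ ≤ ω * (N:ℝ)^m := by apply mul_le_mul_of_nonneg_right h1 (le_of_lt hbm)
      · calc ω * (N:ℝ)^m < ((k:ℝ)+1)/(N:ℝ)^m * (N:ℝ)^m := by
              apply mul_lt_mul_of_pos_right h2 hbm
        _ = (k:ℝ) + 1 := by field_simp
    refine ⟨fun i => ?_, hω0, hω1⟩
    have hd : dig N (i : ℕ) ω = dw m w (m - 1 - (i:ℕ)) := by
      rw [dig_eq hN i.2 ω, hfloor]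
      exact digit_sum_digits hN m _ (fun j _ => dw_lt hN m w j) (m - 1 - (i:ℕ)) (by omega)
    rw [dw_rev m w i] at hd
    exact Fin.ext hd


noncomputable def mu : Measure ℝ := volume.restrict (Ico (0:ℝ) 1)

instance : IsProbabilityMeasure (mu) := by
  constructor
  rw [mu, Measure.restrict_apply_univ, Real.volume_Ico]
  norm_num

theorem measurableSet_cylinder (hN : 0 < N) (m : ℕ) (w : Fin m → Fin N) :
    MeasurableSet {ω : ℝ | ∀ i : Fin m, eta hN i ω = w i} := by
  have : {ω : ℝ | ∀ i : Fin m, eta hN i ω = w i} = ⋂ i : Fin m, (eta hN i) ⁻¹' {w i} := by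
    ext ω; simp [Set.mem_iInter]
  rw [this]
  exact MeasurableSet.iInter fun i => (measurable_eta hN i) (measurableSet_singleton _)

theorem mu_cylinder (hN : 0 < N) (m : ℕ) (w : Fin m → Fin N) :
    mu {ω : ℝ | ∀ i : Fin m, eta hN i ω = w i} = ((N : ℝ≥0∞)⁻¹) ^ m := by
  set k : ℕ := ∑ j ∈ range m, dw m w j * N ^ j with hk
  have hklt : k < N ^ m := sum_digits_lt hN m _ (fun j _ => dw_lt hN m w j)
  have hbm : (0:ℝ) < (N : ℝ) ^ m := by positivity
  rw [mu, Measure.restrict_apply (measurableSet_cylinder hN m w), cylinder_eq_Ico hN m w,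
    Real.volume_Ico]
  have harith : ((k:ℝ) + 1) / (N:ℝ)^m - (k:ℝ) / (N:ℝ)^m = ((N:ℝ)^m)⁻¹ := by
    field_simp
    ring
  rw [← hk, harith]
  rw [ENNReal.ofReal_inv_of_pos hbm]
  rw [← ENNReal.inv_pow]
  congr 1
  rw [ENNReal.ofReal_pow (by positivity : (0:ℝ) ≤ (N:ℝ))]
  simp [ENNReal.ofReal_natCast]


/-! ### first-distinct permutation combinatorics -/

def newp (g : ℕ → Fin N) (j : ℕ) : Prop := ∀ k < j, g k ≠ g j
def covered (g : ℕ → Fin N) (n : ℕ) : Prop := ∀ v : Fin N, ∃ j < n, g j = v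
def allv (g : ℕ → Fin N) : Prop := ∀ v : Fin N, ∃ j, g j = v

theorem newp_injOn (g : ℕ → Fin N) : Set.InjOn g (setOf (newp g)) := by
  intro j hj j' hj' hgg
  by_contra hne
  rcases Nat.lt_or_ge j j' with h | h
  · exact hj' j h hgg
  · exact hj j' (by omega) hgg.symm

theorem newp_finite (g : ℕ → Fin N) : (setOf (newp g)).Finite :=
  Set.Finite.of_finite_image (Set.toFinite _) (newp_injOn g)

theorem newp_lt_of_covered {g : ℕ → Fin N} {n j : ℕ} (hc : covered g n) (hj : newp g j) :
    j < n := by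
  by_contra hge
  obtain ⟨k, hk, hgk⟩ := hc (g j)
  exact hj k (by omega) hgk

theorem first_occ_newp {g : ℕ → Fin N} {v : Fin N} (h : ∃ j, g j = v) :
    newp g (Nat.find h) ∧ g (Nat.find h) = v := by
  refine ⟨fun k hk hgk => ?_, Nat.find_spec h⟩
  exact Nat.find_min h hk (by rw [hgk, Nat.find_spec h])

theorem card_newp {g : ℕ → Fin N} (h : allv g) :
    (newp_finite g).toFinset.card = N := by
  have hb : (newp_finite g).toFinset.card = (Finset.univ : Finset (Fin N)).card := by
    refine Finset.card_bij (fun j _ => g j) (fun j _ => Finset.mem_univ _)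
      (fun j hj j' hj' hgg => newp_injOn g (by simpa using hj) (by simpa using hj') hgg)
      (fun v _ => ?_)
    obtain ⟨hn, hv⟩ := first_occ_newp (h v)
    exact ⟨Nat.find (h v), (Set.Finite.mem_toFinset _).mpr hn, hv⟩
  simpa using hb

noncomputable def xiaux (g : ℕ → Fin N) (h : allv g) : Equiv.Perm (Fin N) :=
  Equiv.ofBijective (fun i => g (Nat.nth (newp g) (i : ℕ)))
    (Finite.injective_iff_bijective.mp (by
      have hcard := card_newp h
      have hlt : ∀ a : Fin N, (a : ℕ) < (newp_finite g).toFinset.card := by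
        intro a; rw [hcard]; exact a.2
      have key : ∀ i i' : Fin N, (i : ℕ) < (i' : ℕ) →
          g (Nat.nth (newp g) (i : ℕ)) ≠ g (Nat.nth (newp g) (i' : ℕ)) := by
        intro i i' hw
        have h1 : Nat.nth (newp g) (i : ℕ) < Nat.nth (newp g) (i' : ℕ) :=
          Nat.nth_lt_nth_of_lt_card (newp_finite g) hw (hlt i')
        have h2 : newp g (Nat.nth (newp g) (i' : ℕ)) :=
          Nat.nth_mem_of_lt_card (newp_finite g) (hlt i')
        exact fun hgg => h2 _ h1 hgg
      intro i i' hii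
      by_contra hne
      rcases Nat.lt_or_ge (i : ℕ) (i' : ℕ) with h1 | h1
      · exact key i i' h1 hii
      · have h2 : (i' : ℕ) < (i : ℕ) := by
          rcases Nat.lt_or_ge (i' : ℕ) (i : ℕ) with h2 | h2
          · exact h2
          · exact absurd (Fin.ext (by omega)) hne
        exact key i' i h2 hii.symm))

@[simp] theorem xiaux_apply (g : ℕ → Fin N) (h : allv g) (i : Fin N) :
    xiaux g h i = g (Nat.nth (newp g) (i : ℕ)) := rfl

def Qprop (n : ℕ) (π : Equiv.Perm (Fin N)) (g : ℕ → Fin N) : Prop :=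
  covered g n ∧ ∀ i : Fin N, g (Nat.nth (newp g) (i : ℕ)) = π i

theorem covered_congr {g g' : ℕ → Fin N} {n : ℕ} (hag : ∀ j < n, g j = g' j)
    (hc : covered g n) : covered g' n := by
  intro v
  obtain ⟨j, hj, hgj⟩ := hc v
  exact ⟨j, hj, by rw [← hag j hj]; exact hgj⟩

theorem newp_congr {g g' : ℕ → Fin N} {n : ℕ} (hag : ∀ j < n, g j = g' j)
    (hc : covered g n) : newp g = newp g' := by
  have hc' : covered g' n := covered_congr hag hc
  funext j
  rcases Nat.lt_or_ge j n with hj | hj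
  · apply propext
    constructor
    · intro h k hk
      rw [← hag k (by omega), ← hag j hj]; exact h k hk
    · intro h k hk
      rw [hag k (by omega), hag j hj]; exact h k hk
  · apply propext
    constructor
    · intro h; exact absurd (newp_lt_of_covered hc h) (by omega)
    · intro h; exact absurd (newp_lt_of_covered hc' h) (by omega)

theorem Qprop_congr {g g' : ℕ → Fin N} {n : ℕ} {π : Equiv.Perm (Fin N)}
    (hag : ∀ j < n, g j = g' j) (hQ : Qprop n π g) : Qprop n π g' := by
  obtain ⟨hc, hx⟩ := hQ
  have hp := newp_congr hag hc
  refine ⟨covered_congr hag hc, fun i => ?_⟩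
  rw [← hp]
  rw [← hag _ (newp_lt_of_covered hc (Nat.nth_mem_of_lt_card (newp_finite g)
    (lt_of_lt_of_eq i.2 (card_newp (fun v => (hc v).imp fun j h => h.2)).symm)))]
  exact hx i

theorem Qprop_relabel {g : ℕ → Fin N} {n : ℕ} {π σ : Equiv.Perm (Fin N)}
    (hQ : Qprop n π g) : Qprop n (σ * π) (σ ∘ g) := by
  obtain ⟨hc, hx⟩ := hQ
  have hp : newp (σ ∘ g) = newp g := by
    funext j
    apply propext
    simp only [newp, Function.comp_apply, ne_eq, EmbeddingLike.apply_eq_iff_eq]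
  refine ⟨fun v => ?_, fun i => ?_⟩
  · obtain ⟨j, hj, hgj⟩ := hc (σ⁻¹ v)
    exact ⟨j, hj, by simp [hgj]⟩
  · rw [hp]
    simp [hx i]


noncomputable def Dig (hN : 0 < N) (ω : ℝ) : ℕ → Fin N := fun j => eta hN j ω

open Classical in
noncomputable def xi (hN : 0 < N) (ω : ℝ) : Equiv.Perm (Fin N) :=
  if h : allv (Dig hN ω) then xiaux (Dig hN ω) h else 1

def Aset (hN : 0 < N) (n : ℕ) (π : Equiv.Perm (Fin N)) : Set ℝ :=
  {ω | Qprop n π (Dig hN ω)}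

noncomputable def extw (hN : 0 < N) {n : ℕ} (w : Fin n → Fin N) : ℕ → Fin N :=
  fun j => if h : j < n then w ⟨j, h⟩ else ⟨0, hN⟩

def Wset (hN : 0 < N) (n : ℕ) (π : Equiv.Perm (Fin N)) : Set (Fin n → Fin N) :=
  {w | Qprop n π (extw hN w)}

theorem Aset_eq_biUnion (hN : 0 < N) (n : ℕ) (π : Equiv.Perm (Fin N)) :
    Aset hN n π = ⋃ w ∈ (Set.toFinite (Wset hN n π)).toFinset,
      {ω : ℝ | ∀ i : Fin n, eta hN i ω = w i} := by
  ext ω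
  simp only [Set.mem_iUnion, Set.Finite.mem_toFinset, Aset, Set.mem_setOf_eq, exists_prop]
  constructor
  · intro hQ
    refine ⟨fun i : Fin n => Dig hN ω (i : ℕ), ?_, fun i => rfl⟩
    exact Qprop_congr (fun j hj => by simp [extw, dif_pos hj, Dig]) hQ
  · rintro ⟨w, hw, hcyl⟩
    exact Qprop_congr (fun j hj => by
      rw [extw, dif_pos hj, ← hcyl ⟨j, hj⟩]; rfl) hw

theorem mu_Aset (hN : 0 < N) (n : ℕ) (π : Equiv.Perm (Fin N)) :
    mu (Aset hN n π) =
      ((Set.toFinite (Wset hN n π)).toFinset.card : ℝ≥0∞) * ((N : ℝ≥0∞)⁻¹) ^ n := by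
  rw [Aset_eq_biUnion hN n π]
  rw [measure_biUnion_finset ?hd (fun w _ => measurableSet_cylinder hN n w)]
  · rw [Finset.sum_congr rfl (fun w _ => mu_cylinder hN n w), Finset.sum_const, nsmul_eq_mul]
  case hd =>
    intro w hw w' hw' hne
    refine Set.disjoint_left.mpr (fun ω h1 h2 => hne ?_)
    funext i
    rw [← h1 i, ← h2 i]

theorem card_Wset (hN : 0 < N) (n : ℕ) (π π' : Equiv.Perm (Fin N)) :
    (Set.toFinite (Wset hN n π)).toFinset.card =
      (Set.toFinite (Wset hN n π')).toFinset.card := by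
  rw [← Set.ncard_eq_toFinset_card _ (Set.toFinite _),
    ← Set.ncard_eq_toFinset_card _ (Set.toFinite _)]
  set σ : Equiv.Perm (Fin N) := π' * π⁻¹ with hσ
  have himg : (fun w : Fin n → Fin N => σ ∘ w) '' Wset hN n π = Wset hN n π' := by
    ext w'
    simp only [Set.mem_image, Wset, Set.mem_setOf_eq]
    constructor
    · rintro ⟨w, hw, rfl⟩
      have h1 : Qprop n (σ * π) (σ ∘ extw hN w) := Qprop_relabel hw
      have h2 : Qprop n (σ * π) (extw hN (σ ∘ w)) := by
        refine Qprop_congr (fun j hj => ?_) h1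
        simp [extw, dif_pos hj]
      rw [hσ] at h2
      rw [show π' * π⁻¹ * π = π' from by group] at h2
      exact h2
    · intro hw'
      refine ⟨fun i => σ⁻¹ (w' i), ?_, by funext i; simp⟩
      have h1 := Qprop_relabel (σ := σ⁻¹) hw'
      have h2 : Qprop n (σ⁻¹ * π') (extw hN (fun i => σ⁻¹ (w' i))) := by
        refine Qprop_congr (fun j hj => ?_) h1
        simp [extw, dif_pos hj]
      rw [hσ] at h2
      rw [show (π' * π⁻¹)⁻¹ * π' = π from by group] at h2
      exact h2
  rw [← himg, Set.ncard_image_of_injective _ (fun a b hab => ?_)]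
  funext i
  exact σ.injective (congrFun hab i)

theorem Aset_mono (hN : 0 < N) (π : Equiv.Perm (Fin N)) :
    Monotone (fun n => Aset hN n π) := by
  intro n n' hnn ω hω
  obtain ⟨hc, hx⟩ := hω
  exact ⟨fun v => (hc v).imp (fun j h => ⟨by omega, h.2⟩), hx⟩

theorem xi_eq_of_Qprop {hN : 0 < N} {n : ℕ} {π : Equiv.Perm (Fin N)} {ω : ℝ}
    (hQ : Qprop n π (Dig hN ω)) : xi hN ω = π := by
  have hall : allv (Dig hN ω) := fun v => (hQ.1 v).imp fun j h => h.2
  rw [xi, dif_pos hall]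
  exact Equiv.ext fun i => by rw [xiaux_apply]; exact hQ.2 i

theorem exists_Qprop_of_allv {hN : 0 < N} {ω : ℝ} (hall : allv (Dig hN ω)) :
    ∃ n, Qprop n (xi hN ω) (Dig hN ω) := by
  classical
  refine ⟨(∑ v : Fin N, Nat.find (hall v)) + 1, fun v => ?_, fun i => ?_⟩
  · refine ⟨Nat.find (hall v), ?_, Nat.find_spec (hall v)⟩
    have : Nat.find (hall v) ≤ ∑ v' : Fin N, Nat.find (hall v') :=
      Finset.single_le_sum (f := fun v' => Nat.find (hall v'))
        (fun _ _ => Nat.zero_le _) (Finset.mem_univ v)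
    omega
  · rw [xi, dif_pos hall, xiaux_apply]


theorem mu_word_event (hN : 0 < N) (n : ℕ) (S : Set (Fin n → Fin N)) :
    mu {ω : ℝ | (fun i : Fin n => eta hN i ω) ∈ S} =
      ((Set.toFinite S).toFinset.card : ℝ≥0∞) * ((N : ℝ≥0∞)⁻¹) ^ n := by
  have hdecomp : {ω : ℝ | (fun i : Fin n => eta hN i ω) ∈ S} =
      ⋃ w ∈ (Set.toFinite S).toFinset, {ω : ℝ | ∀ i : Fin n, eta hN i ω = w i} := by
    ext ω
    simp only [Set.mem_iUnion, Set.Finite.mem_toFinset, Set.mem_setOf_eq, exists_prop]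
    constructor
    · intro h; exact ⟨_, h, fun i => rfl⟩
    · rintro ⟨w, hw, hcyl⟩
      have hfe : (fun i : Fin n => eta hN i ω) = w := funext hcyl
      rw [hfe]; exact hw
  rw [hdecomp, measure_biUnion_finset ?hd (fun w _ => measurableSet_cylinder hN n w),
    Finset.sum_congr rfl (fun w _ => mu_cylinder hN n w), Finset.sum_const, nsmul_eq_mul]
  case hd =>
    intro w hw w' hw' hne
    refine Set.disjoint_left.mpr (fun ω h1 h2 => hne ?_)
    funext i
    rw [← h1 i, ← h2 i]

theorem mu_not_allv (hN : 0 < N) : mu {ω : ℝ | ¬ allv (Dig hN ω)} = 0 := by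
  have hv : ∀ v : Fin N, mu {ω : ℝ | ∀ j, Dig hN ω j ≠ v} = 0 := by
    intro v
    have hC : ∀ n : ℕ, mu {ω : ℝ | ∀ i : Fin n, eta hN i ω ≠ v} =
        (((N - 1 : ℕ) : ℝ≥0∞) * ((N : ℝ≥0∞)⁻¹)) ^ n := by
      intro n
      have hcard : (Set.toFinite {w : Fin n → Fin N | ∀ i, w i ≠ v}).toFinset.card
          = (N - 1) ^ n := by
        rw [← Set.ncard_eq_toFinset_card _ (Set.toFinite _), Set.ncard_eq_toFinset_card']
        rw [Set.toFinset_setOf]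
        rw [← Fintype.card_subtype]
        rw [Fintype.card_congr (Equiv.subtypePiEquivPi (p := fun _ u => u ≠ v))]
        rw [Fintype.card_pi]
        have h1 : ∀ i : Fin n, Fintype.card {u : Fin N // u ≠ v} = N - 1 := by
          intro i
          rw [Fintype.card_subtype_compl, Fintype.card_subtype_eq, Fintype.card_fin]
        rw [Finset.prod_congr rfl (fun i _ => h1 i), Finset.prod_const, Finset.card_univ,
          Fintype.card_fin]
      have := mu_word_event hN n {w : Fin n → Fin N | ∀ i, w i ≠ v}
      simp only [Set.mem_setOf_eq] at this
      rw [hcard] at this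
      rw [mul_pow]
      rw [this]
      norm_cast
    have hmono : ∀ n : ℕ, mu {ω : ℝ | ∀ j, Dig hN ω j ≠ v} ≤
        (((N - 1 : ℕ) : ℝ≥0∞) * ((N : ℝ≥0∞)⁻¹)) ^ n := by
      intro n
      rw [← hC n]
      exact measure_mono (fun ω h i => h (i : ℕ))
    refine le_antisymm ?_ zero_le
    have hlt1 : ((N - 1 : ℕ) : ℝ≥0∞) * ((N : ℝ≥0∞)⁻¹) < 1 := by
      rw [← div_eq_mul_inv]
      rw [ENNReal.div_lt_iff (Or.inl (by exact_mod_cast hN.ne')) (Or.inl (by simp))]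
      rw [one_mul]
      exact_mod_cast Nat.sub_lt hN one_pos
    have hconv := ENNReal.tendsto_pow_atTop_nhds_zero_of_lt_one hlt1
    exact ge_of_tendsto hconv (Filter.Eventually.of_forall hmono)
  have hsub : {ω : ℝ | ¬ allv (Dig hN ω)} ⊆ ⋃ v : Fin N, {ω : ℝ | ∀ j, Dig hN ω j ≠ v} := by
    intro ω hω
    simp only [allv, not_forall, not_exists] at hω
    obtain ⟨v, hv'⟩ := hω
    exact Set.mem_iUnion.mpr ⟨v, hv'⟩
  exact measure_mono_null hsub (measure_iUnion_null hv)

theorem measurableSet_Aset (hN : 0 < N) (n : ℕ) (π : Equiv.Perm (Fin N)) :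
    MeasurableSet (Aset hN n π) := by
  rw [Aset_eq_biUnion]
  exact Finset.measurableSet_biUnion _ (fun w _ => measurableSet_cylinder hN n w)

noncomputable def Bset (hN : 0 < N) (π : Equiv.Perm (Fin N)) : Set ℝ := ⋃ n, Aset hN n π

theorem measurableSet_Bset (hN : 0 < N) (π : Equiv.Perm (Fin N)) :
    MeasurableSet (Bset hN π) :=
  MeasurableSet.iUnion fun n => measurableSet_Aset hN n π

theorem mu_Bset_const (hN : 0 < N) (π π' : Equiv.Perm (Fin N)) :
    mu (Bset hN π) = mu (Bset hN π') := by
  rw [Bset, Bset, (Aset_mono hN π).directed_le.measure_iUnion,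
    (Aset_mono hN π').directed_le.measure_iUnion]
  refine iSup_congr fun n => ?_
  rw [mu_Aset, mu_Aset, card_Wset hN n π π']

theorem Bset_subset (hN : 0 < N) (π : Equiv.Perm (Fin N)) :
    Bset hN π ⊆ {ω : ℝ | xi hN ω = π} := by
  rintro ω hω
  obtain ⟨n, hn⟩ := Set.mem_iUnion.mp hω
  exact xi_eq_of_Qprop hn

theorem subset_Bset (hN : 0 < N) (π : Equiv.Perm (Fin N)) :
    {ω : ℝ | xi hN ω = π} ⊆ Bset hN π ∪ {ω : ℝ | ¬ allv (Dig hN ω)} := by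
  intro ω hω
  by_cases hall : allv (Dig hN ω)
  · obtain ⟨n, hn⟩ := exists_Qprop_of_allv hall
    rw [Set.mem_setOf_eq] at hω
    rw [hω] at hn
    exact Or.inl (Set.mem_iUnion.mpr ⟨n, hn⟩)
  · exact Or.inr hall

theorem mu_xi_eq (hN : 0 < N) (π : Equiv.Perm (Fin N)) :
    mu {ω : ℝ | xi hN ω = π} = mu (Bset hN π) := by
  refine le_antisymm ?_ (measure_mono (Bset_subset hN π))
  calc mu {ω : ℝ | xi hN ω = π} ≤ mu (Bset hN π ∪ {ω : ℝ | ¬ allv (Dig hN ω)}) :=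
        measure_mono (subset_Bset hN π)
  _ ≤ mu (Bset hN π) + mu {ω : ℝ | ¬ allv (Dig hN ω)} := measure_union_le _ _
  _ = mu (Bset hN π) := by rw [mu_not_allv hN, add_zero]

theorem mu_xi_uniform (hN : 0 < N) (π : Equiv.Perm (Fin N)) :
    mu {ω : ℝ | xi hN ω = π} = ((N.factorial : ℝ≥0∞))⁻¹ := by
  have hsum : ∑ π' : Equiv.Perm (Fin N), mu (Bset hN π') = 1 := by
    rw [← measure_biUnion_finset ?hd (fun π' _ => measurableSet_Bset hN π')]
    case hd =>
      intro π1 _ π2 _ hne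
      refine Set.disjoint_left.mpr (fun ω h1 h2 => hne ?_)
      rw [← Bset_subset hN π1 h1, ← Bset_subset hN π2 h2]
    refine le_antisymm prob_le_one ?_
    have hcover : (Set.univ : Set ℝ) ⊆
        (⋃ π' ∈ (Finset.univ : Finset (Equiv.Perm (Fin N))), Bset hN π') ∪
          {ω : ℝ | ¬ allv (Dig hN ω)} := by
      intro ω _
      by_cases hall : allv (Dig hN ω)
      · obtain ⟨n, hn⟩ := exists_Qprop_of_allv hall
        exact Or.inl (Set.mem_iUnion.mpr ⟨xi hN ω, Set.mem_iUnion.mpr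
          ⟨Finset.mem_univ _, Set.mem_iUnion.mpr ⟨n, hn⟩⟩⟩)
      · exact Or.inr hall
    calc (1 : ℝ≥0∞) = mu Set.univ := (measure_univ).symm
    _ ≤ mu ((⋃ π' ∈ (Finset.univ : Finset (Equiv.Perm (Fin N))), Bset hN π') ∪
          {ω : ℝ | ¬ allv (Dig hN ω)}) := measure_mono hcover
    _ ≤ mu (⋃ π' ∈ (Finset.univ : Finset (Equiv.Perm (Fin N))), Bset hN π') +
          mu {ω : ℝ | ¬ allv (Dig hN ω)} := measure_union_le _ _
    _ = mu (⋃ π' ∈ (Finset.univ : Finset (Equiv.Perm (Fin N))), Bset hN π') := by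
          rw [mu_not_allv hN, add_zero]
  have hconst : ∀ π' : Equiv.Perm (Fin N), mu (Bset hN π') = mu (Bset hN π) :=
    fun π' => mu_Bset_const hN π' π
  rw [Finset.sum_congr rfl (fun π' _ => hconst π'), Finset.sum_const, Finset.card_univ,
    nsmul_eq_mul] at hsum
  rw [mu_xi_eq hN π]
  have hfact : (Fintype.card (Equiv.Perm (Fin N)) : ℝ≥0∞) = (N.factorial : ℝ≥0∞) := by
    rw [Fintype.card_perm, Fintype.card_fin]
  rw [hfact] at hsum
  have h0 : (N.factorial : ℝ≥0∞) ≠ 0 := by exact_mod_cast N.factorial_pos.ne'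
  have htop : (N.factorial : ℝ≥0∞) ≠ ⊤ := by simp
  calc mu (Bset hN π) = (N.factorial : ℝ≥0∞)⁻¹ * ((N.factorial : ℝ≥0∞) * mu (Bset hN π)) := by
        rw [← mul_assoc, ENNReal.inv_mul_cancel h0 htop, one_mul]
  _ = (N.factorial : ℝ≥0∞)⁻¹ := by rw [hsum, mul_one]


theorem xi_good (hN : 0 < N) (ω : ℝ) (hall : allv (Dig hN ω)) :
    (∀ i : Fin N, (xi hN ω i : ℕ) = firstDistinct (fun j => (Dig hN ω j : ℕ)) (i : ℕ)) ∧
    (∀ n : ℕ, ∀ j < n, ∃ i : Fin N, (i : ℕ) < n ∧ xi hN ω i = Dig hN ω j) := by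
  classical
  have hp : (fun j => ∀ k < j, (Dig hN ω k : ℕ) ≠ (Dig hN ω j : ℕ)) = newp (Dig hN ω) := by
    funext j
    apply propext
    constructor
    · intro h k hk hkj; exact h k hk (by rw [hkj])
    · intro h k hk hkj; exact h k hk (Fin.ext hkj)
  constructor
  · intro i
    rw [xi, dif_pos hall, xiaux_apply]
    simp only [firstDistinct]
    rw [hp]
  · intro n j hj
    set v := Dig hN ω j with hv
    have hex : ∃ j', Dig hN ω j' = v := ⟨j, rfl⟩
    obtain ⟨hnew, hval⟩ := first_occ_newp hex
    have hj0le : Nat.find hex ≤ j := Nat.find_le rfl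
    have hcnt : Nat.count (newp (Dig hN ω)) (Nat.find hex) < N := by
      have h1 := Nat.count_lt_card (newp_finite (Dig hN ω)) hnew
      exact lt_of_lt_of_eq h1 (card_newp hall)
    refine ⟨⟨Nat.count (newp (Dig hN ω)) (Nat.find hex), hcnt⟩, ?_, ?_⟩
    · have h2 : Nat.count (newp (Dig hN ω)) (Nat.find hex) ≤ Nat.find hex := Nat.count_le _
      simp only [Fin.val_mk]
      omega
    · rw [xi, dif_pos hall, xiaux_apply]
      simp only [Fin.val_mk]
      rw [Nat.nth_count hnew]
      exact hval

end FDC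

end FDCAux

/-- There is a coupling of an i.i.d. uniform sequence `η` on `{1,…,N}` with a uniformly
random permutation `ξ` of `{1,…,N}` such that almost surely `ξ(i)` is the `i`-th distinct
value appearing in `η`, and for every `n` the values `η(1),…,η(n)` lie in `{ξ(1),…,ξ(n)}`. -/
theorem exists_iid_uniform_first_distinct_coupling (N : ℕ) (hN : 0 < N) :
    ∃ (Ω : Type) (_ : MeasurableSpace Ω) (μ : Measure Ω),
      IsProbabilityMeasure μ ∧
      ∃ (η : ℕ → Ω → Fin N) (ξ : Ω → Equiv.Perm (Fin N)),
        (∀ i, Measurable (η i)) ∧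
        -- η is a sequence of i.i.d. uniform random variables on Fin N
        (∀ (m : ℕ) (w : Fin m → Fin N),
          μ {ω | ∀ i : Fin m, η i ω = w i} = ((N : ℝ≥0∞)⁻¹) ^ m) ∧
        -- ξ is uniformly distributed over the symmetric group
        (∀ π : Equiv.Perm (Fin N), μ {ω | ξ ω = π} = (N.factorial : ℝ≥0∞)⁻¹) ∧
        (∀ᵐ ω ∂μ,
          (∀ i : Fin N, (ξ ω i : ℕ) = firstDistinct (fun j => (η j ω : ℕ)) (i : ℕ)) ∧
          (∀ n : ℕ, ∀ j < n, ∃ i : Fin N, (i : ℕ) < n ∧ ξ ω i = η j ω)) := by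
  refine ⟨ℝ, inferInstance, FDC.mu, inferInstance, fun i ω => FDC.eta hN i ω, FDC.xi hN,
    fun i => FDC.measurable_eta hN i, fun m w => FDC.mu_cylinder hN m w,
    fun π => FDC.mu_xi_uniform hN π, ?_⟩
  rw [MeasureTheory.ae_iff]
  refine measure_mono_null (fun ω hω => ?_) (FDC.mu_not_allv hN)
  simp only [Set.mem_setOf_eq] at hω ⊢
  intro hall
  exact hω (FDC.xi_good hN ω hall)
end

section
/- Let c_1,...,c_N be reals, and let X_1,...,X_n be a sample without replacement from {c_1,...,c_N}, and Y_1,...,Y_n a sample without replacement from the k-fold multiplied population consisting of k copies of each c_i (n ≤ N, k ≥ 1). Then for every convex function f : ℝ → ℝ, E[f(X_1+...+X_n)] ≤ E[f(Y_1+...+Y_n)]. -/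
open Finset

/-- The `k`-fold multiplied population: the multiset of size `k·N` containing `k` copies of
each value `c i`, indexed so that the `j`-th item carries the value `c (j / k)`. -/
def kfold (N k : ℕ) (c : Fin N → ℝ) (j : Fin (k * N)) : ℝ :=
  if h : (j : ℕ) / k < N then c ⟨(j : ℕ) / k, h⟩ else 0

namespace KfoldAux

variable {N k : ℕ}

lemma slot_lt {a r : ℕ} (ha : a < N) (hr : r < k) : a * k + r < k * N := by
  calc a * k + r < a * k + k := by omega
    _ = (a + 1) * k := by ring
    _ ≤ N * k := Nat.mul_le_mul_right k ha
    _ = k * N := Nat.mul_comm _ _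

/-- group of a slot -/
def grp (hk : 0 < k) (j : Fin (k * N)) : Fin N :=
  ⟨(j : ℕ) / k, by
    have hj := j.2
    rw [Nat.div_lt_iff_lt_mul hk]
    exact Nat.lt_of_lt_of_le hj (Nat.le_of_eq (Nat.mul_comm k N))⟩

lemma kfold_eq_grp (hk : 0 < k) (c : Fin N → ℝ) (j : Fin (k * N)) :
    kfold N k c j = c (grp hk j) := by
  have h : (j : ℕ) / k < N := (grp hk j).2
  simp [kfold, h, grp]

lemma slot_div {a r : ℕ} (hk : 0 < k) (hr : r < k) : (a * k + r) / k = a := by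
  rw [Nat.add_comm, Nat.add_mul_div_right _ _ hk, Nat.div_eq_of_lt hr, Nat.zero_add]

lemma slot_mod {a r : ℕ} (hr : r < k) : (a * k + r) % k = r := by
  rw [Nat.add_comm, Nat.add_mul_mod_self_right, Nat.mod_eq_of_lt hr]

def slotMap (hk : 0 < k) (ρ : Fin N → Fin N) (j : Fin (k * N)) : Fin (k * N) :=
  ⟨(ρ (grp hk j) : ℕ) * k + (j : ℕ) % k, slot_lt (ρ (grp hk j)).2 (Nat.mod_lt _ hk)⟩

lemma grp_slotMap (hk : 0 < k) (ρ : Fin N → Fin N) (j : Fin (k * N)) :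
    grp hk (slotMap hk ρ j) = ρ (grp hk j) :=
  Fin.ext (slot_div hk (Nat.mod_lt _ hk))

lemma mod_slotMap (hk : 0 < k) (ρ : Fin N → Fin N) (j : Fin (k * N)) :
    ((slotMap hk ρ j : ℕ)) % k = (j : ℕ) % k :=
  slot_mod (Nat.mod_lt _ hk)

lemma slotMap_slotMap (hk : 0 < k) {ρ ρ' : Fin N → Fin N} (h : ∀ x, ρ' (ρ x) = x)
    (j : Fin (k * N)) : slotMap hk ρ' (slotMap hk ρ j) = j := by
  apply Fin.ext
  show (ρ' (grp hk (slotMap hk ρ j)) : ℕ) * k + ((slotMap hk ρ j : ℕ)) % k = j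
  rw [grp_slotMap, h, mod_slotMap]
  show ((j : ℕ) / k) * k + (j : ℕ) % k = j
  exact Nat.div_add_mod' _ _

/-- lift a permutation of groups to a permutation of slots -/
def lift (hk : 0 < k) (ρ : Equiv.Perm (Fin N)) : Equiv.Perm (Fin (k * N)) where
  toFun := slotMap hk ρ
  invFun := slotMap hk ρ.symm
  left_inv := slotMap_slotMap hk ρ.symm_apply_apply
  right_inv := slotMap_slotMap hk ρ.apply_symm_apply

lemma grp_lift (hk : 0 < k) (ρ : Equiv.Perm (Fin N)) (j : Fin (k * N)) :
    grp hk (lift hk ρ j) = ρ (grp hk j) :=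
  grp_slotMap hk ρ j


lemma swap_mem_iff {α : Type*} [DecidableEq α] {R : Finset α} {a b : α} (ha : a ∈ R)
    (hb : b ∈ R) (x : α) : Equiv.swap a b x ∈ R ↔ x ∈ R := by
  rcases eq_or_ne x a with rfl | hxa
  · simp [Equiv.swap_apply_left, ha, hb]
  rcases eq_or_ne x b with rfl | hxb
  · simp [Equiv.swap_apply_right, ha, hb]
  · rw [Equiv.swap_apply_of_ne_of_ne hxa hxb]

lemma exists_perm_image {α : Type*} [Fintype α] [DecidableEq α] {A B : Finset α}
    (h : A.card = B.card) : ∃ ρ : Equiv.Perm α, A.image ρ = B := by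
  have e1 : {x // x ∈ A} ≃ {x // x ∈ B} := Fintype.equivOfCardEq (by
    simp only [Fintype.card_coe, h])
  have e2 : {x // ¬ x ∈ A} ≃ {x // ¬ x ∈ B} := Fintype.equivOfCardEq (by
    simp only [Fintype.card_subtype_compl, Fintype.card_coe, h])
  refine ⟨((Equiv.sumCompl (· ∈ A)).symm.trans (Equiv.sumCongr e1 e2)).trans
    (Equiv.sumCompl (· ∈ B)), ?_⟩
  apply Finset.eq_of_subset_of_card_le
  · intro y hy
    simp only [Finset.mem_image] at hy
    obtain ⟨x, hx, rfl⟩ := hy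
    simp only [Equiv.trans_apply, Equiv.sumCompl_symm_apply_of_pos hx,
      Equiv.sumCongr_apply, Sum.map_inl, Equiv.sumCompl_apply_inl]
    exact (e1 ⟨x, hx⟩).2
  · rw [Finset.card_image_of_injective _ (Equiv.injective _), h]


variable {n : ℕ}

/-- image of the first `n` positions under a permutation of `Fin N` -/
def Rset (hn : n ≤ N) (σ : Equiv.Perm (Fin N)) : Finset (Fin N) :=
  Finset.image (fun i : Fin n => σ (Fin.castLE hn i)) Finset.univ

/-- groups hit by the first `n` positions under a permutation of `Fin (k*N)` -/
def Tset (hk : 0 < k) (hle : n ≤ k * N) (τ : Equiv.Perm (Fin (k * N))) : Finset (Fin N) :=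
  Finset.image (fun i : Fin n => grp hk (τ (Fin.castLE hle i))) Finset.univ

/-- number of `n`-subsets containing the hit groups -/
def SC (hk : 0 < k) (hle : n ≤ k * N) (τ : Equiv.Perm (Fin (k * N))) : ℕ :=
  ((Finset.univ.powersetCard n).filter (fun R => Tset hk hle τ ⊆ R)).card

/-- the coupling kernel -/
noncomputable def W (hk : 0 < k) (hn : n ≤ N) (hle : n ≤ k * N) (σ : Equiv.Perm (Fin N))
    (τ : Equiv.Perm (Fin (k * N))) : ℝ :=
  if Tset hk hle τ ⊆ Rset hn σ then ((SC hk hle τ : ℝ))⁻¹ else 0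

lemma card_Rset (hn : n ≤ N) (σ : Equiv.Perm (Fin N)) : (Rset hn σ).card = n := by
  have hinj : Function.Injective (fun i : Fin n => σ (Fin.castLE hn i)) :=
    fun a b hab => Fin.castLE_injective hn (σ.injective hab)
  rw [Rset, Finset.card_image_of_injective _ hinj, Finset.card_univ, Fintype.card_fin]

lemma card_Tset_le (hk : 0 < k) (hle : n ≤ k * N) (τ : Equiv.Perm (Fin (k * N))) :
    (Tset hk hle τ).card ≤ n := by
  refine le_trans Finset.card_image_le (by simp)

lemma Rset_mul (hn : n ≤ N) (ρ σ : Equiv.Perm (Fin N)) :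
    Rset hn (ρ * σ) = (Rset hn σ).image ρ := by
  rw [Rset, Rset, Finset.image_image]
  rfl

lemma Tset_mul (hk : 0 < k) (hle : n ≤ k * N) (ρ : Equiv.Perm (Fin N))
    (τ : Equiv.Perm (Fin (k * N))) :
    Tset hk hle (lift hk ρ * τ) = (Tset hk hle τ).image ρ := by
  rw [Tset, Tset, Finset.image_image]
  refine Finset.image_congr fun i _ => ?_
  exact grp_lift hk ρ _

lemma image_symm_image {α : Type*} [DecidableEq α] (ρ : Equiv.Perm α) (R : Finset α) :
    (R.image ρ).image ρ.symm = R := by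
  rw [Finset.image_image, Equiv.symm_comp_self, Finset.image_id]

lemma image_image_symm {α : Type*} [DecidableEq α] (ρ : Equiv.Perm α) (R : Finset α) :
    (R.image ρ.symm).image ρ = R := by
  rw [Finset.image_image, Equiv.self_comp_symm, Finset.image_id]

lemma SC_mul (hk : 0 < k) (hle : n ≤ k * N) (ρ : Equiv.Perm (Fin N))
    (τ : Equiv.Perm (Fin (k * N))) :
    SC hk hle (lift hk ρ * τ) = SC hk hle τ := by
  rw [SC, SC]
  refine Finset.card_nbij' (fun R => R.image ρ.symm) (fun R => R.image ρ) ?_ ?_ ?_ ?_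
  · intro R hR
    simp only [Finset.mem_coe, Finset.mem_filter, Finset.mem_powersetCard_univ, Tset_mul] at hR ⊢
    refine ⟨by rw [Finset.card_image_of_injective _ ρ.symm.injective]; exact hR.1, ?_⟩
    have := Finset.image_subset_image (f := ⇑ρ.symm) hR.2
    rwa [image_symm_image] at this
  · intro R hR
    simp only [Finset.mem_coe, Finset.mem_filter, Finset.mem_powersetCard_univ, Tset_mul] at hR ⊢
    refine ⟨by rw [Finset.card_image_of_injective _ ρ.injective]; exact hR.1, ?_⟩
    exact Finset.image_subset_image hR.2
  · intro R _
    exact image_image_symm ρ R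
  · intro R _
    exact image_symm_image ρ R

lemma SC_pos (hk : 0 < k) (hn : n ≤ N) (hle : n ≤ k * N) (τ : Equiv.Perm (Fin (k * N))) :
    0 < SC hk hle τ := by
  rw [SC, Finset.card_pos]
  obtain ⟨u, hu1, -, hu3⟩ := Finset.exists_subsuperset_card_eq
    (Finset.subset_univ (Tset hk hle τ)) (card_Tset_le hk hle τ) (by simpa using hn)
  exact ⟨u, by simp [Finset.mem_filter, Finset.mem_powersetCard_univ, hu1, hu3]⟩

/-- the common fiber cardinality -/
def fib (hn : n ≤ N) (R : Finset (Fin N)) : ℕ :=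
  (Finset.univ.filter (fun σ : Equiv.Perm (Fin N) => Rset hn σ = R)).card

lemma fib_const (hn : n ≤ N) {R : Finset (Fin N)} (hR : R.card = n) :
    fib hn R = fib hn (Rset hn 1) := by
  obtain ⟨ρ, hρ⟩ := exists_perm_image (A := R) (B := Rset hn 1) (by rw [card_Rset, hR])
  rw [fib, fib]
  refine Finset.card_nbij' (fun σ => ρ * σ) (fun σ => ρ⁻¹ * σ) ?_ ?_ ?_ ?_
  · intro σ hσ
    simp only [Finset.mem_coe, Finset.mem_filter, Finset.mem_univ, true_and] at hσ ⊢
    rw [Rset_mul, hσ, hρ]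
  · intro σ hσ
    simp only [Finset.mem_coe, Finset.mem_filter, Finset.mem_univ, true_and] at hσ ⊢
    rw [Rset_mul, hσ, ← hρ, Equiv.Perm.inv_def, image_symm_image]
  · intro σ _; group
  · intro σ _; group


lemma count_superset (hk : 0 < k) (hn : n ≤ N) (hle : n ≤ k * N)
    (τ : Equiv.Perm (Fin (k * N))) :
    (Finset.univ.filter fun σ : Equiv.Perm (Fin N) => Tset hk hle τ ⊆ Rset hn σ).card
      = SC hk hle τ * fib hn (Rset hn 1) := by
  rw [Finset.card_eq_sum_card_fiberwise (f := fun σ => Rset hn σ)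
    (t := (Finset.univ.powersetCard n).filter fun R => Tset hk hle τ ⊆ R)
    (fun σ hσ => by
      simp only [Finset.mem_coe, Finset.mem_filter, Finset.mem_univ, true_and] at hσ
      simp only [Finset.mem_coe, Finset.mem_filter, Finset.mem_powersetCard_univ]
      exact ⟨card_Rset hn σ, hσ⟩)]
  rw [Finset.sum_congr rfl (fun R hR => ?_), Finset.sum_const, SC, smul_eq_mul]
  simp only [Finset.mem_filter, Finset.mem_powersetCard_univ] at hR
  rw [Finset.filter_filter]
  rw [show (Finset.univ.filter fun σ : Equiv.Perm (Fin N) =>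
      Tset hk hle τ ⊆ Rset hn σ ∧ Rset hn σ = R)
    = Finset.univ.filter fun σ : Equiv.Perm (Fin N) => Rset hn σ = R from
    Finset.filter_congr fun σ _ => ⟨fun h => h.2, fun h => ⟨h ▸ hR.2, h⟩⟩]
  exact fib_const hn hR.1

lemma sum_W_left (hk : 0 < k) (hn : n ≤ N) (hle : n ≤ k * N)
    (τ : Equiv.Perm (Fin (k * N))) :
    ∑ σ : Equiv.Perm (Fin N), W hk hn hle σ τ = (fib hn (Rset hn 1) : ℝ) := by
  rw [show (fun σ : Equiv.Perm (Fin N) => W hk hn hle σ τ)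
      = fun σ => if Tset hk hle τ ⊆ Rset hn σ then ((SC hk hle τ : ℝ))⁻¹ else 0 from rfl,
    Finset.sum_ite, Finset.sum_const, Finset.sum_const_zero, add_zero, count_superset hk hn hle,
    nsmul_eq_mul, Nat.cast_mul, mul_comm ((SC hk hle τ : ℝ)) _, mul_assoc,
    mul_inv_cancel₀ (Nat.cast_ne_zero.mpr (SC_pos hk hn hle τ).ne'), mul_one]

/-- multiplicity of group `a` among the first `n` slot draws -/
def mcount (hk : 0 < k) (hle : n ≤ k * N) (a : Fin N) (τ : Equiv.Perm (Fin (k * N))) : ℕ :=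
  (Finset.univ.filter fun i : Fin n => grp hk (τ (Fin.castLE hle i)) = a).card

lemma mcount_eq_zero (hk : 0 < k) (hle : n ≤ k * N) {a : Fin N} {τ : Equiv.Perm (Fin (k * N))}
    (ha : a ∉ Tset hk hle τ) : mcount hk hle a τ = 0 := by
  rw [mcount, Finset.card_eq_zero, Finset.filter_eq_empty_iff]
  intro i _
  exact fun h => ha (h ▸ Finset.mem_image_of_mem _ (Finset.mem_univ i))

lemma sum_mcount (hk : 0 < k) (hle : n ≤ k * N) (τ : Equiv.Perm (Fin (k * N))) :
    ∑ a : Fin N, mcount hk hle a τ = n := by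
  have := Finset.sum_fiberwise_of_maps_to
    (s := (Finset.univ : Finset (Fin n))) (g := fun i : Fin n => grp hk (τ (Fin.castLE hle i))) (t := (Finset.univ : Finset (Fin N)))
    (fun i _ => Finset.mem_univ _) (fun _ => (1 : ℕ))
  calc ∑ a : Fin N, mcount hk hle a τ
      = ∑ a : Fin N, ∑ _i ∈ Finset.univ.filter
          (fun i : Fin n => grp hk (τ (Fin.castLE hle i)) = a), 1 :=
        Finset.sum_congr rfl fun a _ => Finset.card_eq_sum_ones _
    _ = ∑ _i : Fin n, 1 := this
    _ = n := by simp

lemma sum_mcount_mul (hk : 0 < k) (hle : n ≤ k * N) (τ : Equiv.Perm (Fin (k * N)))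
    (c : Fin N → ℝ) :
    ∑ a : Fin N, (mcount hk hle a τ : ℝ) * c a
      = ∑ i : Fin n, c (grp hk (τ (Fin.castLE hle i))) := by
  have := Finset.sum_fiberwise_of_maps_to'
    (s := (Finset.univ : Finset (Fin n))) (g := fun i : Fin n => grp hk (τ (Fin.castLE hle i))) (t := (Finset.univ : Finset (Fin N)))
    (fun i _ => Finset.mem_univ _) c
  rw [← this]
  refine Finset.sum_congr rfl fun a _ => ?_
  rw [Finset.sum_const, mcount, nsmul_eq_mul]

lemma mcount_swap_mul (hk : 0 < k) (hle : n ≤ k * N) (a b : Fin N)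
    (τ : Equiv.Perm (Fin (k * N))) :
    mcount hk hle a (lift hk (Equiv.swap a b) * τ) = mcount hk hle b τ := by
  rw [mcount, mcount]
  refine congrArg Finset.card (Finset.filter_congr fun i _ => ?_)
  rw [Equiv.Perm.mul_apply, grp_lift]
  constructor
  · intro h
    have := congrArg (Equiv.swap a b) h
    rwa [Equiv.swap_apply_self, Equiv.swap_apply_left] at this
  · intro h
    rw [h, Equiv.swap_apply_right]


lemma W_nonneg (hk : 0 < k) (hn : n ≤ N) (hle : n ≤ k * N) (σ : Equiv.Perm (Fin N))
    (τ : Equiv.Perm (Fin (k * N))) : 0 ≤ W hk hn hle σ τ := by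
  rw [W]
  split
  · positivity
  · exact le_rfl

lemma W_eq_zero (hk : 0 < k) (hn : n ≤ N) (hle : n ≤ k * N) {σ : Equiv.Perm (Fin N)}
    {τ : Equiv.Perm (Fin (k * N))} (h : ¬ Tset hk hle τ ⊆ Rset hn σ) :
    W hk hn hle σ τ = 0 := by
  rw [W, if_neg h]

lemma W_swap (hk : 0 < k) (hn : n ≤ N) (hle : n ≤ k * N) {σ : Equiv.Perm (Fin N)}
    {a b : Fin N} (ha : a ∈ Rset hn σ) (hb : b ∈ Rset hn σ) (τ : Equiv.Perm (Fin (k * N))) :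
    W hk hn hle σ (lift hk (Equiv.swap a b) * τ) = W hk hn hle σ τ := by
  rw [W, W, SC_mul, Tset_mul]
  congr 1
  apply propext
  rw [Finset.image_subset_iff]
  constructor
  · exact fun h x hx => (swap_mem_iff ha hb x).1 (h x hx)
  · exact fun h x hx => (swap_mem_iff ha hb x).2 (h hx)

lemma Z_pos (hk : 0 < k) (hn : n ≤ N) (hle : n ≤ k * N) (σ : Equiv.Perm (Fin N)) :
    0 < ∑ τ : Equiv.Perm (Fin (k * N)), W hk hn hle σ τ := by
  refine Finset.sum_pos' (fun τ _ => W_nonneg hk hn hle σ τ) ⟨lift hk σ, Finset.mem_univ _, ?_⟩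
  have hsub : Tset hk hle (lift hk σ) ⊆ Rset hn σ := by
    intro x hx
    rw [Tset, Finset.mem_image] at hx
    obtain ⟨i, -, rfl⟩ := hx
    rw [grp_lift]
    have hdiv : ((Fin.castLE hle i : Fin (k * N)) : ℕ) / k < n :=
      Nat.lt_of_le_of_lt (Nat.div_le_self _ k) i.2
    rw [Rset, Finset.mem_image]
    exact ⟨⟨_, hdiv⟩, Finset.mem_univ _, congrArg σ (Fin.ext rfl)⟩
  rw [W, if_pos hsub]
  have := SC_pos hk hn hle (lift hk σ)
  positivity

lemma Z_const (hk : 0 < k) (hn : n ≤ N) (hle : n ≤ k * N) (σ : Equiv.Perm (Fin N)) :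
    ∑ τ : Equiv.Perm (Fin (k * N)), W hk hn hle σ τ
      = ∑ τ : Equiv.Perm (Fin (k * N)), W hk hn hle 1 τ := by
  obtain ⟨ρ, hρ⟩ := exists_perm_image (A := Rset hn σ) (B := Rset hn 1)
    (by rw [card_Rset, card_Rset])
  refine Fintype.sum_equiv (Equiv.mulLeft (lift hk ρ)) _ _ fun τ => ?_
  rw [Equiv.coe_mulLeft, W, W, SC_mul, Tset_mul]
  congr 1
  apply propext
  rw [← hρ, Finset.image_subset_image_iff ρ.injective]

lemma key (hk : 0 < k) (hn : n ≤ N) (hle : n ≤ k * N) (hn0 : 0 < n) (σ : Equiv.Perm (Fin N))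
    (c : Fin N → ℝ) :
    ∑ τ : Equiv.Perm (Fin (k * N)),
        W hk hn hle σ τ * (∑ i : Fin n, c (grp hk (τ (Fin.castLE hle i))))
      = (∑ τ : Equiv.Perm (Fin (k * N)), W hk hn hle σ τ)
        * (∑ i : Fin n, c (σ (Fin.castLE hn i))) := by
  set Z := ∑ τ : Equiv.Perm (Fin (k * N)), W hk hn hle σ τ with hZ
  set G : Fin N → ℝ := fun a =>
    ∑ τ : Equiv.Perm (Fin (k * N)), W hk hn hle σ τ * (mcount hk hle a τ : ℝ) with hG
  have hG0 : ∀ a ∉ Rset hn σ, G a = 0 := by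
    intro a ha
    refine Finset.sum_eq_zero fun τ _ => ?_
    by_cases hsub : Tset hk hle τ ⊆ Rset hn σ
    · rw [mcount_eq_zero hk hle (fun hmem => ha (hsub hmem)), Nat.cast_zero, mul_zero]
    · rw [W_eq_zero hk hn hle hsub, zero_mul]
  have hGswap : ∀ a ∈ Rset hn σ, ∀ b ∈ Rset hn σ, G a = G b := by
    intro a ha b hb
    refine (Fintype.sum_equiv (Equiv.mulLeft (lift hk (Equiv.swap a b))) _ _ fun τ => ?_).symm
    rw [Equiv.coe_mulLeft, W_swap hk hn hle ha hb, mcount_swap_mul]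
  have hGsum : ∑ a ∈ Rset hn σ, G a = Z * n := by
    simp only [hG]
    rw [Finset.sum_comm, hZ, Finset.sum_mul]
    refine Finset.sum_congr rfl fun τ _ => ?_
    by_cases hsub : Tset hk hle τ ⊆ Rset hn σ
    · rw [← Finset.mul_sum]
      congr 1
      have h1 : ∑ a ∈ Rset hn σ, (mcount hk hle a τ : ℝ)
          = ∑ a : Fin N, (mcount hk hle a τ : ℝ) :=
        Finset.sum_subset (Finset.subset_univ _) fun a _ ha => by
          rw [mcount_eq_zero hk hle fun hmem => ha (hsub hmem), Nat.cast_zero]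
      rw [h1, ← Nat.cast_sum, sum_mcount hk hle τ]
    · simp [W_eq_zero hk hn hle hsub]
  have hGval : ∀ a ∈ Rset hn σ, G a = Z := by
    intro a ha
    have h1 : ∑ b ∈ Rset hn σ, G b = (n : ℝ) * G a := by
      rw [Finset.sum_congr rfl fun b hb => hGswap b hb a ha, Finset.sum_const, card_Rset,
        nsmul_eq_mul]
    have h2 : (n : ℝ) * G a = Z * n := by rw [← h1, hGsum]
    rw [mul_comm Z] at h2
    exact mul_left_cancel₀ (Nat.cast_ne_zero.mpr hn0.ne') h2
  calc ∑ τ : Equiv.Perm (Fin (k * N)),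
        W hk hn hle σ τ * ∑ i : Fin n, c (grp hk (τ (Fin.castLE hle i)))
      = ∑ τ : Equiv.Perm (Fin (k * N)),
          W hk hn hle σ τ * ∑ a : Fin N, (mcount hk hle a τ : ℝ) * c a :=
        Finset.sum_congr rfl fun τ _ => by rw [sum_mcount_mul]
    _ = ∑ a : Fin N, G a * c a := by
        simp only [hG, Finset.mul_sum, Finset.sum_mul, mul_assoc]
        exact Finset.sum_comm
    _ = ∑ a ∈ Rset hn σ, G a * c a :=
        (Finset.sum_subset (Finset.subset_univ _) fun a _ ha => by
          rw [hG0 a ha, zero_mul]).symm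
    _ = ∑ a ∈ Rset hn σ, Z * c a := Finset.sum_congr rfl fun a ha => by rw [hGval a ha]
    _ = Z * ∑ a ∈ Rset hn σ, c a := by rw [Finset.mul_sum]
    _ = Z * ∑ i : Fin n, c (σ (Fin.castLE hn i)) := by
        rw [Rset, Finset.sum_image fun x _ y _ h => Fin.castLE_injective hn (σ.injective h)]

end KfoldAux

/-- Sampling `n ≤ N` values without replacement from `c_1,…,c_N` is dominated in the convex
order by sampling `n` values without replacement from the `k`-fold multiplied population
consisting of `k` copies of each `c_i`. -/
theorem kfold_sampling_convex_order (N n k : ℕ) (hk : 1 ≤ k) (hn : n ≤ N)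
    (c : Fin N → ℝ) (f : ℝ → ℝ) (hf : ConvexOn ℝ Set.univ f) :
    (N.factorial : ℝ)⁻¹ *
        ∑ σ : Equiv.Perm (Fin N), f (∑ i : Fin n, c (σ (Fin.castLE hn i)))
      ≤ ((k * N).factorial : ℝ)⁻¹ *
        ∑ τ : Equiv.Perm (Fin (k * N)),
          f (∑ i : Fin n,
              kfold N k c (τ (Fin.castLE (hn.trans (Nat.le_mul_of_pos_left N hk)) i))) := by
  classical
  have hk0 : 0 < k := hk
  have hle : n ≤ k * N := hn.trans (Nat.le_mul_of_pos_left N hk)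
  have hNfac : (0 : ℝ) < (N.factorial : ℝ) := by exact_mod_cast N.factorial_pos
  have hMfac : (0 : ℝ) < ((k * N).factorial : ℝ) := by exact_mod_cast (k * N).factorial_pos
  simp only [KfoldAux.kfold_eq_grp hk0 c]
  rcases Nat.eq_zero_or_pos n with rfl | hn0
  · simp only [Finset.univ_eq_empty, Finset.sum_empty, Finset.sum_const, Finset.card_univ,
      Fintype.card_perm, Fintype.card_fin, nsmul_eq_mul]
    rw [← mul_assoc, ← mul_assoc, inv_mul_cancel₀ hNfac.ne', inv_mul_cancel₀ hMfac.ne']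
  -- main case
  set Z : ℝ := ∑ τ : Equiv.Perm (Fin (k * N)), KfoldAux.W hk0 hn hle 1 τ with hZdef
  have hZσ : ∀ σ : Equiv.Perm (Fin N),
      ∑ τ : Equiv.Perm (Fin (k * N)), KfoldAux.W hk0 hn hle σ τ = Z :=
    fun σ => KfoldAux.Z_const hk0 hn hle σ
  have hZpos : 0 < Z := KfoldAux.Z_pos hk0 hn hle 1
  set F : ℝ := (KfoldAux.fib hn (KfoldAux.Rset hn 1) : ℝ) with hFdef
  have hWfib : ∀ τ : Equiv.Perm (Fin (k * N)),
      ∑ σ : Equiv.Perm (Fin N), KfoldAux.W hk0 hn hle σ τ = F :=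
    fun τ => KfoldAux.sum_W_left hk0 hn hle τ
  have hcount : (N.factorial : ℝ) * Z = ((k * N).factorial : ℝ) * F := by
    have hswap : ∑ σ : Equiv.Perm (Fin N), ∑ τ : Equiv.Perm (Fin (k * N)),
        KfoldAux.W hk0 hn hle σ τ
        = ∑ τ : Equiv.Perm (Fin (k * N)), ∑ σ : Equiv.Perm (Fin N),
          KfoldAux.W hk0 hn hle σ τ := Finset.sum_comm
    rw [Finset.sum_congr rfl fun σ _ => hZσ σ, Finset.sum_congr rfl fun τ _ => hWfib τ,
      Finset.sum_const, Finset.sum_const, Finset.card_univ, Finset.card_univ,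
      Fintype.card_perm, Fintype.card_fin, Fintype.card_perm, Fintype.card_fin,
      nsmul_eq_mul, nsmul_eq_mul] at hswap
    exact hswap
  have jensen : ∀ σ : Equiv.Perm (Fin N),
      f (∑ i : Fin n, c (σ (Fin.castLE hn i)))
        ≤ ∑ τ : Equiv.Perm (Fin (k * N)), (Z⁻¹ * KfoldAux.W hk0 hn hle σ τ)
            * f (∑ i : Fin n, c (KfoldAux.grp hk0 (τ (Fin.castLE hle i)))) := by
    intro σ
    have hmean : ∑ τ : Equiv.Perm (Fin (k * N)), (Z⁻¹ * KfoldAux.W hk0 hn hle σ τ)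
        • (∑ i : Fin n, c (KfoldAux.grp hk0 (τ (Fin.castLE hle i))))
        = ∑ i : Fin n, c (σ (Fin.castLE hn i)) := by
      simp only [smul_eq_mul, mul_assoc, ← Finset.mul_sum]
      rw [KfoldAux.key hk0 hn hle hn0 σ c, hZσ σ, ← mul_assoc, inv_mul_cancel₀ hZpos.ne',
        one_mul]
    have hjj := hf.map_sum_le (t := Finset.univ)
      (w := fun τ : Equiv.Perm (Fin (k * N)) => Z⁻¹ * KfoldAux.W hk0 hn hle σ τ)
      (p := fun τ : Equiv.Perm (Fin (k * N)) =>
        ∑ i : Fin n, c (KfoldAux.grp hk0 (τ (Fin.castLE hle i))))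
      (fun τ _ => mul_nonneg (inv_nonneg.mpr hZpos.le) (KfoldAux.W_nonneg hk0 hn hle σ τ))
      (by rw [← Finset.mul_sum, hZσ σ, inv_mul_cancel₀ hZpos.ne'])
      (fun τ _ => Set.mem_univ _)
    rw [hmean] at hjj
    simpa only [smul_eq_mul] using hjj
  calc (N.factorial : ℝ)⁻¹ * ∑ σ : Equiv.Perm (Fin N), f (∑ i : Fin n, c (σ (Fin.castLE hn i)))
      ≤ (N.factorial : ℝ)⁻¹ * ∑ σ : Equiv.Perm (Fin N),
          ∑ τ : Equiv.Perm (Fin (k * N)), (Z⁻¹ * KfoldAux.W hk0 hn hle σ τ)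
            * f (∑ i : Fin n, c (KfoldAux.grp hk0 (τ (Fin.castLE hle i)))) :=
        mul_le_mul_of_nonneg_left (Finset.sum_le_sum fun σ _ => jensen σ)
          (inv_nonneg.mpr hNfac.le)
    _ = (N.factorial : ℝ)⁻¹ * ∑ τ : Equiv.Perm (Fin (k * N)), (Z⁻¹ * F)
          * f (∑ i : Fin n, c (KfoldAux.grp hk0 (τ (Fin.castLE hle i)))) := by
        congr 1
        rw [Finset.sum_comm]
        refine Finset.sum_congr rfl fun τ _ => ?_
        rw [← Finset.sum_mul, ← Finset.mul_sum, hWfib τ]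
    _ = ((k * N).factorial : ℝ)⁻¹ * ∑ τ : Equiv.Perm (Fin (k * N)),
          f (∑ i : Fin n, c (KfoldAux.grp hk0 (τ (Fin.castLE hle i)))) := by
        have hcoeff : (N.factorial : ℝ)⁻¹ * (Z⁻¹ * F) = ((k * N).factorial : ℝ)⁻¹ := by
          field_simp
          linarith [hcount]
        rw [← Finset.mul_sum, ← hcoeff]
        ring
end

section
/- Let c_1,...,c_N be reals and 1 ≤ n ≤ N. Let S_n be the sum of a sample of size n without replacement from {c_1,...,c_N}, and T_n the sum of a sample of size n with surreplacement with parameter d ≥ 1 (each drawn value is returned along with d-1 extra copies of itself). Then for every convex f : ℝ → ℝ, E[f(S_n)] ≤ E[f(T_n)]. -/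
open Finset

/-- The probability that a sample of length `n` with surreplacement parameter `d` from `N`
initially distinct values yields the label sequence `w`: step `i` yields label `j` with
conditional probability `(1 + k(d-1))/(N + i(d-1))` where `k` is the number of earlier
draws of `j`. -/
noncomputable def surWeight (N d n : ℕ) (w : Fin n → Fin N) : ℝ :=
  ∏ i : Fin n,
    (1 + ((Finset.univ.filter (fun j : Fin n => j < i ∧ w j = w i)).card : ℝ)
        * ((d : ℝ) - 1)) / ((N : ℝ) + (i : ℕ) * ((d : ℝ) - 1))

namespace Surrepl



variable {n N : ℕ} {α β : Type*} [DecidableEq α] [DecidableEq β]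

def cnt (w : Fin n → α) (i : Fin n) : ℕ := #(univ.filter fun j => j < i ∧ w j = w i)
def fcnt (w : Fin n → α) (i : Fin n) : ℕ := #(univ.filter fun j => j < i ∧ cnt w j = 0)

theorem cnt_congr {u u' : Fin n → α} {i : Fin n} (h : ∀ j, j ≤ i → u' j = u j) :
    cnt u' i = cnt u i := by
  unfold cnt
  congr 1
  apply filter_congr
  intro j _
  by_cases hj : j < i
  · simp [hj, h j hj.le, h i le_rfl]
  · simp [hj]

theorem fcnt_congr {u u' : Fin n → α} {i : Fin n} (h : ∀ j, j < i → u' j = u j) :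
    fcnt u' i = fcnt u i := by
  unfold fcnt
  congr 1
  apply filter_congr
  intro j _
  by_cases hj : j < i
  · have : cnt u' j = cnt u j := cnt_congr (fun l hl => h l (lt_of_le_of_lt hl hj))
    simp [hj, this]
  · simp [hj]

theorem fcnt_le (w : Fin n → α) (i : Fin n) : fcnt w i ≤ (i : ℕ) := by
  have h1 : (univ.filter fun j : Fin n => j < i ∧ cnt w j = 0) ⊆ Iio i := by
    intro j hj
    simp only [mem_filter, mem_Iio] at *
    exact hj.2.1
  calc fcnt w i ≤ #(Iio i) := card_le_card h1
    _ = i := by simpa using Fin.card_Iio (b := i)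

/-- conditional transition weight of the urn process on patterns -/
noncomputable def factor (N d : ℕ) {n : ℕ} (i : Fin n) (u : Fin n → Fin n) : ℝ :=
  (if cnt u i = 0 then ((N : ℝ) - fcnt u i) / ((n : ℝ) - fcnt u i)
   else 1 + (cnt u i : ℝ) * ((d : ℝ) - 1)) / ((N : ℝ) + (i : ℕ) * ((d : ℝ) - 1))

noncomputable def V (N d : ℕ) {n : ℕ} (u : Fin n → Fin n) : ℝ := ∏ i, factor N d i u

theorem factor_congr {u u' : Fin n → Fin n} {i : Fin n} (h : ∀ j, j ≤ i → u' j = u j) :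
    factor N d i u' = factor N d i u := by
  unfold factor
  rw [cnt_congr h, fcnt_congr (fun j hj => h j hj.le)]

theorem denom_pos {d : ℕ} (hd : 1 ≤ d) (hn : n ≤ N) (i : Fin n) :
    0 < (N : ℝ) + (i : ℕ) * ((d : ℝ) - 1) := by
  have h1 : (1 : ℝ) ≤ (d : ℝ) := Nat.one_le_cast.mpr hd
  have h2 : 0 < n := i.pos
  have : 0 < (N : ℝ) := by
    have : 0 < N := lt_of_lt_of_le h2 hn
    exact_mod_cast this
  have h3 : (0:ℝ) ≤ ((i:ℕ):ℝ) := Nat.cast_nonneg _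
  nlinarith

theorem factor_nonneg {d : ℕ} (hd : 1 ≤ d) (hn : n ≤ N) (i : Fin n) (u : Fin n → Fin n) :
    0 ≤ factor N d i u := by
  have hdenom := denom_pos hd hn i
  have h1 : (1 : ℝ) ≤ (d : ℝ) := Nat.one_le_cast.mpr hd
  have hfc : (fcnt u i : ℝ) < n := by
    exact_mod_cast lt_of_le_of_lt (fcnt_le u i) i.isLt
  have hfcN : (fcnt u i : ℝ) < N := by
    have := lt_of_lt_of_le (lt_of_le_of_lt (fcnt_le u i) i.isLt) hn
    exact_mod_cast this
  unfold factor
  apply div_nonneg _ hdenom.le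
  split
  · apply div_nonneg <;> linarith
  · have : (0:ℝ) ≤ (cnt u i : ℝ) := Nat.cast_nonneg _
    nlinarith

theorem V_nonneg {d : ℕ} (hd : 1 ≤ d) (hn : n ≤ N) (u : Fin n → Fin n) : 0 ≤ V N d u :=
  Finset.prod_nonneg (fun i _ => factor_nonneg hd hn i u)


theorem cnt_comp {ψ : α → β} (hψ : Function.Injective ψ) (w : Fin n → α) (i : Fin n) :
    cnt (ψ ∘ w) i = cnt w i := by
  unfold cnt
  congr 1
  apply filter_congr
  intro j _
  simp [hψ.eq_iff]


theorem fcnt_comp {ψ : α → β} (hψ : Function.Injective ψ) (w : Fin n → α) (i : Fin n) :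
    fcnt (ψ ∘ w) i = fcnt w i := by
  unfold fcnt
  congr 1
  apply filter_congr
  intro j _
  simp [cnt_comp hψ]


theorem card_image_prefix (w : Fin n → α) (m : ℕ) :
    #((univ.filter fun j : Fin n => (j : ℕ) < m).image w)
      = #(univ.filter fun j : Fin n => (j : ℕ) < m ∧ cnt w j = 0) := by
  have himg : ((univ.filter fun j : Fin n => (j : ℕ) < m).image w)
      = ((univ.filter fun j : Fin n => (j : ℕ) < m ∧ cnt w j = 0).image w) := by
    apply Finset.Subset.antisymm
    · intro a ha
      simp only [mem_image, mem_filter, mem_univ, true_and] at ha ⊢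
      obtain ⟨j, hj, rfl⟩ := ha
      set F := univ.filter fun l : Fin n => l ≤ j ∧ w l = w j with hF
      have hjF : j ∈ F := by simp [hF]
      have hFne : F.Nonempty := ⟨j, hjF⟩
      refine ⟨F.min' hFne, ?_, ?_⟩
      · have hmm := F.min'_mem hFne
        simp only [hF, mem_filter, mem_univ, true_and] at hmm
        constructor
        · exact lt_of_le_of_lt (by exact_mod_cast hmm.1) hj
        · rw [cnt, Finset.card_eq_zero, Finset.filter_eq_empty_iff]
          intro l _
          rintro ⟨hl1, hl2⟩
          have hlF : l ∈ F := by
            simp only [hF, mem_filter, mem_univ, true_and]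
            exact ⟨hl1.le.trans hmm.1, by rw [hl2, hmm.2]⟩
          exact absurd (F.min'_le l hlF) (not_le.mpr hl1)
      · have := F.min'_mem hFne
        simp only [hF, mem_filter, mem_univ, true_and] at this
        exact this.2
    · apply image_subset_image
      intro j hj
      simp only [mem_filter] at *
      exact ⟨hj.1, hj.2.1⟩
  rw [himg]
  apply Finset.card_image_of_injOn
  intro j₁ h1 j₂ h2 hw
  simp only [mem_coe, mem_filter, mem_univ, true_and] at h1 h2
  by_contra hne
  rcases lt_or_gt_of_ne (Ne.symm hne) with hlt | hlt
  · have : j₂ ∈ univ.filter fun l => l < j₁ ∧ w l = w j₁ := by simp [hlt, hw]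
    have := Finset.card_ne_zero_of_mem this
    exact this h1.2
  · have : j₁ ∈ univ.filter fun l => l < j₂ ∧ w l = w j₂ := by simp [hlt, hw]
    have := Finset.card_ne_zero_of_mem this
    exact this h2.2




theorem prod_rank {γ : Type*} [LinearOrder γ] [DecidableEq γ] (F : Finset γ) (φ : ℕ → ℝ) :
    ∏ i ∈ F, φ (#(F.filter fun j => j < i)) = ∏ k ∈ range #F, φ k := by
  induction F using Finset.induction_on_max with
  | empty => simp
  | insert m F' hm ih =>
    have hmF : m ∉ F' := fun h => lt_irrefl m (hm m h)
    rw [Finset.prod_insert hmF, Finset.card_insert_of_notMem hmF, Finset.prod_range_succ]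
    have h1 : ((insert m F').filter fun j => j < m) = F' := by
      ext x
      simp only [mem_filter, mem_insert]
      constructor
      · rintro ⟨hxm | hx, hlt⟩
        · exact absurd (hxm ▸ hlt) (lt_irrefl m)
        · exact hx
      · intro hx; exact ⟨Or.inr hx, hm x hx⟩
    have h2 : ∀ i ∈ F', ((insert m F').filter fun j => j < i) = F'.filter fun j => j < i := by
      intro i hi
      ext x
      simp only [mem_filter, mem_insert]
      constructor
      · rintro ⟨hxm | hx, hlt⟩
        · exact absurd ((hm i hi).trans (hxm ▸ hlt : m < i)) (lt_irrefl i)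
        · exact ⟨hx, hlt⟩
      · rintro ⟨hx, hlt⟩; exact ⟨Or.inr hx, hlt⟩
    have h3 : ∏ i ∈ F', φ (#((insert m F').filter fun j => j < i))
        = ∏ i ∈ F', φ (#(F'.filter fun j => j < i)) :=
      Finset.prod_congr rfl (fun i hi => by rw [h2 i hi])
    rw [h1, h3, ih, mul_comm]

theorem perm_sum {γ : Type*} [Fintype γ] [DecidableEq γ] (h : γ → ℝ) (b : γ) :
    (Fintype.card γ : ℝ) * ∑ τ : Equiv.Perm γ, h (τ b)
      = ((Fintype.card γ).factorial : ℝ) * ∑ x, h x := by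
  have key : ∀ b' : γ, ∑ τ : Equiv.Perm γ, h (τ b') = ∑ τ : Equiv.Perm γ, h (τ b) := by
    intro b'
    have := Equiv.sum_comp (Equiv.mulRight (Equiv.swap b b'))
      (fun τ : Equiv.Perm γ => h (τ b))
    rw [← this]
    apply Finset.sum_congr rfl
    intro τ _
    simp [Equiv.Perm.mul_apply, Equiv.swap_apply_left]
  have step1 : ∑ b' : γ, ∑ τ : Equiv.Perm γ, h (τ b')
      = (Fintype.card γ : ℝ) * ∑ τ : Equiv.Perm γ, h (τ b) := by
    rw [Finset.sum_congr rfl (fun b' _ => key b')]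
    rw [Finset.sum_const, Finset.card_univ, nsmul_eq_mul]
  rw [← step1, Finset.sum_comm]
  rw [Finset.sum_congr rfl (fun τ _ => Equiv.sum_comp τ h)]
  rw [Finset.sum_const, Finset.card_univ, Fintype.card_perm, nsmul_eq_mul]




variable {n N : ℕ}

/-- the image of the first `n` positions of a permutation -/
def Timg (hn : n ≤ N) (σ : Equiv.Perm (Fin N)) : Finset (Fin N) :=
  univ.image (fun j : Fin n => σ (Fin.castLE hn j))

theorem mem_Timg_swap (hn : n ≤ N) (a b : Fin N) (σ : Equiv.Perm (Fin N)) (s : Fin N) :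
    s ∈ Timg hn (Equiv.swap a b * σ) ↔ Equiv.swap a b s ∈ Timg hn σ := by
  simp only [Timg, mem_image, mem_univ, true_and, Equiv.Perm.mul_apply]
  constructor
  · rintro ⟨j, hj⟩
    exact ⟨j, by rw [← hj, Equiv.swap_apply_self]⟩
  · rintro ⟨j, hj⟩
    exact ⟨j, by rw [hj, Equiv.swap_apply_self]⟩

theorem pcount_step (hn : n ≤ N) (S' : Finset (Fin N)) (s₀ : Fin N) (hs₀ : s₀ ∉ S')
    (hcard : #S' < n) :
    #(univ.filter fun σ : Equiv.Perm (Fin N) => insert s₀ S' ⊆ Timg hn σ) * (N - #S')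
      = #(univ.filter fun σ : Equiv.Perm (Fin N) => S' ⊆ Timg hn σ) * (n - #S') := by
  have hn0 : 0 < n := lt_of_le_of_lt (Nat.zero_le _) hcard
  classical
  set A := univ.filter fun σ : Equiv.Perm (Fin N) => insert s₀ S' ⊆ Timg hn σ with hA
  set Bf := univ.filter fun σ : Equiv.Perm (Fin N) => S' ⊆ Timg hn σ with hB
  set RP := (A ×ˢ (univ : Finset (Fin N))).filter (fun q => q.2 ∉ S') with hRP
  set LP := (Bf ×ˢ (univ : Finset (Fin n))).filter
      (fun p => p.1 (Fin.castLE hn p.2) ∉ S') with hLP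
  have hAmem : ∀ σ : Equiv.Perm (Fin N), σ ∈ A ↔ insert s₀ S' ⊆ Timg hn σ := by
    intro σ; rw [hA, mem_filter]; simp
  have hBmem : ∀ σ : Equiv.Perm (Fin N), σ ∈ Bf ↔ S' ⊆ Timg hn σ := by
    intro σ; rw [hB, mem_filter]; simp
  -- RP card
  have hRPcard : #RP = #A * (N - #S') := by
    have h1 : RP = A ×ˢ (univ.filter fun x : Fin N => x ∉ S') := by
      ext ⟨σ, x⟩
      simp only [hRP, mem_filter, mem_product, mem_univ, true_and, and_true]
    rw [h1, card_product]
    congr 1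
    have h2 : #(univ.filter fun x : Fin N => x ∈ S') = #S' := by
      congr 1
      ext x; simp
    have h3 := Finset.card_filter_add_card_filter_not
      (s := (univ : Finset (Fin N))) (p := fun x => x ∈ S')
    rw [h2, card_univ, Fintype.card_fin] at h3
    omega
  -- LP card
  have hLPcard : #LP = #Bf * (n - #S') := by
    rw [Finset.card_eq_sum_card_fiberwise (f := Prod.fst) (t := Bf)
      (fun p hp => by
        rw [hLP, mem_coe, mem_filter, mem_product] at hp
        exact hp.1.1)]
    have hfibcard : ∀ σ ∈ Bf, #(LP.filter fun p => p.1 = σ) = n - #S' := by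
      intro σ hσ
      have hσ' : S' ⊆ Timg hn σ := (hBmem σ).mp hσ
      have hfib : #(LP.filter fun p => p.1 = σ)
          = #(univ.filter fun j : Fin n => σ (Fin.castLE hn j) ∉ S') := by
        apply Finset.card_nbij' (i := Prod.snd)
          (j := fun jj : Fin n => ((σ, jj) : Equiv.Perm (Fin N) × Fin n))
        · intro p hp
          rw [mem_coe, mem_filter] at hp
          obtain ⟨hp1, hp3⟩ := hp
          rw [hLP, mem_filter] at hp1
          subst hp3
          simp only [mem_coe, mem_filter, mem_univ, true_and]
          exact hp1.2
        · intro jj hjj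
          simp only [mem_coe, mem_filter, mem_univ, true_and] at hjj
          rw [mem_coe, mem_filter]
          refine ⟨?_, rfl⟩
          rw [hLP, mem_filter, mem_product]
          exact ⟨⟨hσ, mem_univ _⟩, hjj⟩
        · intro p hp
          rw [mem_coe, mem_filter] at hp
          rw [← hp.2]
        · intro jj _
          rfl
      rw [hfib]
      have hinj : Function.Injective (fun j : Fin n => σ (Fin.castLE hn j)) :=
        fun a b hab => Fin.castLE_injective hn (σ.injective hab)
      have hmemcard : #(univ.filter fun j : Fin n => σ (Fin.castLE hn j) ∈ S') = #S' := by
        apply Finset.card_nbij (i := fun j : Fin n => σ (Fin.castLE hn j))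
        · intro j hj
          simp only [mem_coe, mem_filter, mem_univ, true_and] at hj
          exact hj
        · intro a _ b _ hab
          exact hinj hab
        · intro s hs
          have hsT := hσ' hs
          simp only [Timg, mem_image, mem_univ, true_and] at hsT
          obtain ⟨j, hj⟩ := hsT
          refine ⟨j, ?_, hj⟩
          simp only [mem_coe, mem_filter, mem_univ, true_and]
          rw [hj]; exact hs
      have h3 := Finset.card_filter_add_card_filter_not
        (s := (univ : Finset (Fin n))) (p := fun j => σ (Fin.castLE hn j) ∈ S')
      rw [hmemcard, card_univ, Fintype.card_fin] at h3
      omega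
    rw [Finset.sum_congr rfl hfibcard, Finset.sum_const, smul_eq_mul]
  -- the bijection LP ≃ RP
  have hbij : #LP = #RP := by
    apply Finset.card_nbij'
      (i := fun p : Equiv.Perm (Fin N) × Fin n =>
        ((Equiv.swap (p.1 (Fin.castLE hn p.2)) s₀ * p.1, p.1 (Fin.castLE hn p.2)) :
          Equiv.Perm (Fin N) × Fin N))
      (j := fun q : Equiv.Perm (Fin N) × Fin N =>
        ((Equiv.swap q.2 s₀ * q.1,
          if h : ∃ j : Fin n, q.1 (Fin.castLE hn j) = s₀ then h.choose else ⟨0, hn0⟩) :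
          Equiv.Perm (Fin N) × Fin n))
    · rintro ⟨σ, j⟩ hp
      rw [hLP, mem_coe, mem_filter, mem_product] at hp
      obtain ⟨⟨hσB, -⟩, hx⟩ := hp
      have hσB' : S' ⊆ Timg hn σ := (hBmem σ).mp hσB
      rw [hRP, mem_coe, mem_filter, mem_product]
      refine ⟨⟨?_, mem_univ _⟩, hx⟩
      rw [hAmem]
      intro s hs
      rw [mem_insert] at hs
      rw [mem_Timg_swap]
      rcases hs with rfl | hsS
      · rw [Equiv.swap_apply_right]
        simp only [Timg, mem_image, mem_univ, true_and]
        exact ⟨j, rfl⟩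
      · rw [Equiv.swap_apply_of_ne_of_ne (fun h => hx (by rw [← h]; exact hsS)) (fun h => hs₀ (by rw [← h]; exact hsS))]
        exact hσB' hsS
    · rintro ⟨ρ, x⟩ hq
      rw [hRP, mem_coe, mem_filter, mem_product] at hq
      obtain ⟨⟨hρA, -⟩, hx⟩ := hq
      have hρA' : insert s₀ S' ⊆ Timg hn ρ := (hAmem ρ).mp hρA
      have hs₀mem : s₀ ∈ Timg hn ρ := hρA' (mem_insert_self _ _)
      simp only [Timg, mem_image, mem_univ, true_and] at hs₀mem
      have hex : ∃ j : Fin n, ρ (Fin.castLE hn j) = s₀ := hs₀mem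
      have hchoose := hex.choose_spec
      rw [hLP, mem_coe, mem_filter, mem_product]
      simp only [dif_pos hex]
      refine ⟨⟨?_, mem_univ _⟩, ?_⟩
      · rw [hBmem]
        intro s hsS
        rw [mem_Timg_swap]
        rw [Equiv.swap_apply_of_ne_of_ne (fun h => hx (by rw [← h]; exact hsS)) (fun h => hs₀ (by rw [← h]; exact hsS))]
        exact hρA' (mem_insert_of_mem hsS)
      · simp only [Equiv.Perm.mul_apply, hchoose, Equiv.swap_apply_right]
        exact hx
    · rintro ⟨σ, j⟩ hp
      rw [hLP, mem_coe, mem_filter, mem_product] at hp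
      obtain ⟨⟨-, -⟩, hx⟩ := hp
      have hex : ∃ j' : Fin n, (Equiv.swap (σ (Fin.castLE hn j)) s₀ * σ) (Fin.castLE hn j') = s₀ :=
        ⟨j, by simp only [Equiv.Perm.mul_apply, Equiv.swap_apply_left]⟩
      simp only [dif_pos hex]
      refine Prod.ext ?_ ?_
      · show Equiv.swap (σ (Fin.castLE hn j)) s₀ * (Equiv.swap (σ (Fin.castLE hn j)) s₀ * σ) = σ
        rw [← mul_assoc, Equiv.swap_mul_self, one_mul]
      · show hex.choose = j
        have hcs := hex.choose_spec
        have hj2 : (Equiv.swap (σ (Fin.castLE hn j)) s₀ * σ) (Fin.castLE hn j) = s₀ := by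
          simp only [Equiv.Perm.mul_apply, Equiv.swap_apply_left]
        have := (Equiv.swap (σ (Fin.castLE hn j)) s₀ * σ).injective (hcs.trans hj2.symm)
        exact Fin.castLE_injective hn this
    · rintro ⟨ρ, x⟩ hq
      rw [hRP, mem_coe, mem_filter, mem_product] at hq
      obtain ⟨⟨hρA, -⟩, hx⟩ := hq
      have hρA' : insert s₀ S' ⊆ Timg hn ρ := (hAmem ρ).mp hρA
      have hs₀mem : s₀ ∈ Timg hn ρ := hρA' (mem_insert_self _ _)
      simp only [Timg, mem_image, mem_univ, true_and] at hs₀mem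
      have hex : ∃ j : Fin n, ρ (Fin.castLE hn j) = s₀ := hs₀mem
      have hchoose := hex.choose_spec
      simp only [dif_pos hex]
      have hval : (Equiv.swap x s₀ * ρ) (Fin.castLE hn hex.choose) = x := by
        simp only [Equiv.Perm.mul_apply, hchoose, Equiv.swap_apply_right]
      refine Prod.ext ?_ ?_
      · show Equiv.swap ((Equiv.swap x s₀ * ρ) (Fin.castLE hn hex.choose)) s₀ *
          (Equiv.swap x s₀ * ρ) = ρ
        rw [hval, ← mul_assoc, Equiv.swap_mul_self, one_mul]
      · exact hval
  rw [← hRPcard, ← hbij, hLPcard]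

theorem pcount (hn : n ≤ N) (S : Finset (Fin N)) (hS : #S ≤ n) :
    #(univ.filter fun σ : Equiv.Perm (Fin N) => S ⊆ Timg hn σ) * ∏ k ∈ range #S, (N - k)
      = N.factorial * ∏ k ∈ range #S, (n - k) := by
  classical
  induction S using Finset.induction_on with
  | empty =>
    simp [Finset.filter_true_of_mem, Finset.card_univ, Fintype.card_perm]
  | @insert s₀ S' hs₀ ih =>
    rw [Finset.card_insert_of_notMem hs₀] at hS ⊢
    have hcard : #S' < n := hS
    have ih' := ih hcard.le
    rw [Finset.prod_range_succ, Finset.prod_range_succ]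
    calc #(univ.filter fun σ : Equiv.Perm (Fin N) => insert s₀ S' ⊆ Timg hn σ)
          * ((∏ k ∈ range #S', (N - k)) * (N - #S'))
        = (#(univ.filter fun σ : Equiv.Perm (Fin N) => insert s₀ S' ⊆ Timg hn σ) * (N - #S'))
          * ∏ k ∈ range #S', (N - k) := by ring
      _ = (#(univ.filter fun σ : Equiv.Perm (Fin N) => S' ⊆ Timg hn σ) * (n - #S'))
          * ∏ k ∈ range #S', (N - k) := by rw [pcount_step hn S' s₀ hs₀ hcard]
      _ = (n - #S') * (#(univ.filter fun σ : Equiv.Perm (Fin N) => S' ⊆ Timg hn σ)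
          * ∏ k ∈ range #S', (N - k)) := by ring
      _ = (n - #S') * (N.factorial * ∏ k ∈ range #S', (n - k)) := by rw [ih']
      _ = N.factorial * ((∏ k ∈ range #S', (n - k)) * (n - #S')) := by ring




variable {n N : ℕ}

theorem sum_factor_update {d : ℕ} (hd : 1 ≤ d) (hn : n ≤ N) (u : Fin n → Fin n) (i : Fin n) :
    ∑ a : Fin n, factor N d i (Function.update u i a) = 1 := by
  classical
  have hdenom := denom_pos (N := N) hd hn i
  set U := (univ.filter fun j : Fin n => j < i).image u with hU
  have hUcard : #U = fcnt u i := by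
    have h1 : (univ.filter fun j : Fin n => j < i)
        = (univ.filter fun j : Fin n => (j : ℕ) < (i : ℕ)) := by
      apply filter_congr; intro j _; rw [Fin.lt_def]
    have h2 : (univ.filter fun j : Fin n => j < i ∧ cnt u j = 0)
        = (univ.filter fun j : Fin n => (j : ℕ) < (i : ℕ) ∧ cnt u j = 0) := by
      apply filter_congr; intro j _
      rw [Fin.lt_def]
    rw [hU, h1, fcnt, h2]
    exact card_image_prefix u (i : ℕ)
  set D := fcnt u i with hD
  have hDlt : D < n := lt_of_le_of_lt (fcnt_le u i) i.isLt
  have hDltN : D < N := lt_of_lt_of_le hDlt hn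
  have hcnt : ∀ a : Fin n, cnt (Function.update u i a) i
      = #(univ.filter fun j : Fin n => j < i ∧ u j = a) := by
    intro a
    unfold cnt
    congr 1
    apply filter_congr
    intro j _
    by_cases hj : j < i
    · have hji : j ≠ i := ne_of_lt hj
      simp [hj, Function.update_of_ne hji, Function.update_self]
    · simp [hj]
  have hfcnt : ∀ a : Fin n, fcnt (Function.update u i a) i = D := by
    intro a
    rw [hD]
    exact fcnt_congr (fun j hj => Function.update_of_ne (ne_of_lt hj) a u)
  have hfresh : ∀ a : Fin n, (cnt (Function.update u i a) i = 0 ↔ a ∉ U) := by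
    intro a
    rw [hcnt a, Finset.card_eq_zero]
    constructor
    · intro h ha
      rw [hU, mem_image] at ha
      obtain ⟨j, hj, hja⟩ := ha
      rw [mem_filter] at hj
      have hjmem : j ∈ univ.filter (fun j : Fin n => j < i ∧ u j = a) := by
        rw [mem_filter]; exact ⟨mem_univ _, hj.2, hja⟩
      rw [h] at hjmem
      exact absurd hjmem (notMem_empty j)
    · intro ha
      rw [Finset.filter_eq_empty_iff]
      intro j _ hj
      refine ha ?_
      rw [hU, mem_image]
      exact ⟨j, by rw [mem_filter]; exact ⟨mem_univ _, hj.1⟩, hj.2⟩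
  have hsumcnt : ∑ a ∈ U, #(univ.filter fun j : Fin n => j < i ∧ u j = a) = (i : ℕ) := by
    have hfib := Finset.card_eq_sum_card_fiberwise
      (s := univ.filter fun j : Fin n => j < i) (t := U) (f := u)
      (fun j hj => by rw [hU]; exact mem_image_of_mem u hj)
    have hIcard : #(univ.filter fun j : Fin n => j < i) = (i : ℕ) := by
      have hIio : (univ.filter fun j : Fin n => j < i) = Iio i := by
        ext j; simp
      rw [hIio]; simpa using Fin.card_Iio (b := i)
    rw [← hIcard, hfib]
    apply Finset.sum_congr rfl
    intro a _
    congr 1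
    rw [Finset.filter_filter]
  -- rewrite each summand
  have hform : ∀ a : Fin n, factor N d i (Function.update u i a)
      = (if a ∈ U then 1 + (#(univ.filter fun j : Fin n => j < i ∧ u j = a) : ℝ) * ((d : ℝ) - 1)
         else ((N : ℝ) - D) / ((n : ℝ) - D)) / ((N : ℝ) + (i : ℕ) * ((d : ℝ) - 1)) := by
    intro a
    rw [factor, hfcnt]
    by_cases hA : a ∈ U
    · rw [if_pos hA, if_neg (fun h => (hfresh a).mp h hA), hcnt]
    · rw [if_neg hA, if_pos ((hfresh a).mpr hA)]
  rw [Finset.sum_congr rfl (fun a _ => hform a), ← Finset.sum_div,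
    div_eq_one_iff_eq hdenom.ne']
  rw [← Finset.sum_filter_add_sum_filter_not (univ : Finset (Fin n)) (fun a => a ∈ U)]
  have hUeq : (univ.filter fun a : Fin n => a ∈ U) = U := by ext a; simp
  have hin : ∑ a ∈ univ.filter (fun a : Fin n => a ∈ U),
      (if a ∈ U then 1 + (#(univ.filter fun j : Fin n => j < i ∧ u j = a) : ℝ) * ((d : ℝ) - 1)
       else ((N : ℝ) - D) / ((n : ℝ) - D))
      = (D : ℝ) + (i : ℕ) * ((d : ℝ) - 1) := by
    rw [hUeq]
    rw [Finset.sum_congr rfl (fun a ha => if_pos ha)]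
    rw [Finset.sum_add_distrib, Finset.sum_const, ← Finset.sum_mul]
    rw [← Nat.cast_sum, hsumcnt, hUcard]
    simp [nsmul_eq_mul]
  have hnotcard : #(univ.filter fun a : Fin n => a ∉ U) = n - D := by
    have h3 := Finset.card_filter_add_card_filter_not
      (s := (univ : Finset (Fin n))) (p := fun a => a ∈ U)
    rw [hUeq, card_univ, Fintype.card_fin, hUcard] at h3
    omega
  have hout : ∑ a ∈ univ.filter (fun a : Fin n => a ∉ U),
      (if a ∈ U then 1 + (#(univ.filter fun j : Fin n => j < i ∧ u j = a) : ℝ) * ((d : ℝ) - 1)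
       else ((N : ℝ) - D) / ((n : ℝ) - D))
      = (N : ℝ) - D := by
    rw [Finset.sum_congr rfl (fun a ha => if_neg (by
      rw [mem_filter] at ha; exact ha.2))]
    rw [Finset.sum_const, hnotcard, nsmul_eq_mul]
    rw [Nat.cast_sub hDlt.le]
    have hne : (n : ℝ) - (D : ℝ) ≠ 0 := by
      have : (D : ℝ) < (n : ℝ) := by exact_mod_cast hDlt
      linarith
    field_simp
  rw [hin, hout]
  ring

theorem sum_update_eq {ι γ : Type*} [Fintype ι] [Fintype γ] [DecidableEq ι]
    (F : (ι → γ) → ℝ) (i₀ : ι) :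
    ∑ u : ι → γ, ∑ a : γ, F (Function.update u i₀ a)
      = (Fintype.card γ : ℝ) * ∑ u : ι → γ, F u := by
  classical
  have h1 : ∑ u : ι → γ, ∑ a : γ, F (Function.update u i₀ a)
      = ∑ p : (ι → γ) × γ, F (Function.update p.1 i₀ p.2) := by
    rw [Fintype.sum_prod_type]
  have hinv : Function.Involutive
      (fun p : (ι → γ) × γ => ((Function.update p.1 i₀ p.2, p.1 i₀) : (ι → γ) × γ)) := by
    rintro ⟨u, a⟩
    simp only
    refine Prod.ext ?_ ?_
    · simp [Function.update_idem, Function.update_eq_self, Function.update_self]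
    · simp [Function.update_self]
  have h2 : ∑ p : (ι → γ) × γ, F (Function.update p.1 i₀ p.2)
      = ∑ p : (ι → γ) × γ, F p.1 := by
    exact Fintype.sum_bijective _ hinv.bijective _ _ (fun p => rfl)
  rw [h1, h2, Fintype.sum_prod_type]
  simp only [Finset.sum_const, Finset.card_univ, nsmul_eq_mul]
  rw [← Finset.mul_sum]

theorem sum_V {d : ℕ} (hd : 1 ≤ d) (hn : n ≤ N) :
    ∑ u : Fin n → Fin n, V N d u = 1 := by
  classical
  have key : ∀ m : ℕ, m ≤ n →
      ∑ u : Fin n → Fin n, ∏ i ∈ univ.filter (fun i : Fin n => (i : ℕ) < m), factor N d i u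
        = (n : ℝ) ^ (n - m) := by
    intro m
    induction m with
    | zero =>
      intro _
      have : (univ.filter (fun i : Fin n => (i : ℕ) < 0)) = ∅ := by
        apply Finset.filter_eq_empty_iff.mpr
        intro i _
        omega
      simp [this, Finset.card_univ]
    | succ m ih =>
      intro hm1
      have hm : m < n := hm1
      have ihm := ih hm.le
      set i₀ : Fin n := ⟨m, hm⟩ with hi₀
      have hfilt : (univ.filter (fun i : Fin n => (i : ℕ) < m + 1))
          = insert i₀ (univ.filter (fun i : Fin n => (i : ℕ) < m)) := by
        ext j
        simp only [mem_filter, mem_univ, true_and, mem_insert]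
        constructor
        · intro hj
          by_cases hjm : (j : ℕ) = m
          · left; exact Fin.ext hjm
          · right; omega
        · rintro (rfl | hj)
          · simp [hi₀]
          · omega
      have hnotmem : i₀ ∉ univ.filter (fun i : Fin n => (i : ℕ) < m) := by
        simp [hi₀]
      have hmain : (n : ℝ) * (∑ u : Fin n → Fin n,
          ∏ i ∈ univ.filter (fun i : Fin n => (i : ℕ) < m + 1), factor N d i u)
          = (n : ℝ) ^ (n - m) := by
        have hexp : ∀ u : Fin n → Fin n,
            ∏ i ∈ univ.filter (fun i : Fin n => (i : ℕ) < m + 1), factor N d i u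
            = factor N d i₀ u * ∏ i ∈ univ.filter (fun i : Fin n => (i : ℕ) < m),
                factor N d i u := by
          intro u
          rw [hfilt, Finset.prod_insert hnotmem]
        rw [Finset.sum_congr rfl (fun u _ => hexp u)]
        have := sum_update_eq (ι := Fin n) (γ := Fin n)
          (fun u => factor N d i₀ u * ∏ i ∈ univ.filter (fun i : Fin n => (i : ℕ) < m),
            factor N d i u) i₀
        rw [Fintype.card_fin] at this
        rw [← this]
        have hupd : ∀ (u : Fin n → Fin n) (a : Fin n),
            (∏ i ∈ univ.filter (fun i : Fin n => (i : ℕ) < m),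
              factor N d i (Function.update u i₀ a))
            = ∏ i ∈ univ.filter (fun i : Fin n => (i : ℕ) < m), factor N d i u := by
          intro u a
          apply Finset.prod_congr rfl
          intro i hi
          simp only [mem_filter, mem_univ, true_and] at hi
          apply factor_congr
          intro j hj
          apply Function.update_of_ne
          intro hji
          rw [hji, hi₀] at hj
          have : (i : ℕ) < m := hi
          have : m ≤ (i : ℕ) := by exact_mod_cast hj
          omega
        calc ∑ u : Fin n → Fin n, ∑ a : Fin n,
              factor N d i₀ (Function.update u i₀ a)
                * ∏ i ∈ univ.filter (fun i : Fin n => (i : ℕ) < m),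
                    factor N d i (Function.update u i₀ a)
            = ∑ u : Fin n → Fin n, ∑ a : Fin n,
              factor N d i₀ (Function.update u i₀ a)
                * ∏ i ∈ univ.filter (fun i : Fin n => (i : ℕ) < m), factor N d i u := by
              apply Finset.sum_congr rfl; intro u _
              apply Finset.sum_congr rfl; intro a _
              rw [hupd u a]
          _ = ∑ u : Fin n → Fin n,
              (∑ a : Fin n, factor N d i₀ (Function.update u i₀ a))
                * ∏ i ∈ univ.filter (fun i : Fin n => (i : ℕ) < m), factor N d i u := by
              apply Finset.sum_congr rfl; intro u _
              rw [Finset.sum_mul]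
          _ = ∑ u : Fin n → Fin n,
              ∏ i ∈ univ.filter (fun i : Fin n => (i : ℕ) < m), factor N d i u := by
              apply Finset.sum_congr rfl; intro u _
              rw [sum_factor_update hd hn u i₀, one_mul]
          _ = (n : ℝ) ^ (n - m) := ihm
      have hn0 : (n : ℝ) ≠ 0 := by
        have : 0 < n := lt_of_le_of_lt (Nat.zero_le m) hm
        exact_mod_cast this.ne'
      have hpow : (n : ℝ) ^ (n - m) = (n : ℝ) * (n : ℝ) ^ (n - (m + 1)) := by
        have : n - m = (n - (m + 1)) + 1 := by omega
        rw [this, pow_succ]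
        ring
      rw [hpow] at hmain
      exact mul_left_cancel₀ hn0 hmain
  have hfin := key n le_rfl
  have huniv : (univ.filter (fun i : Fin n => (i : ℕ) < n)) = univ := by
    apply Finset.filter_true_of_mem
    intro i _
    exact i.isLt
  rw [huniv] at hfin
  rw [Nat.sub_self, pow_zero] at hfin
  unfold V
  exact hfin



variable {n N : ℕ}

theorem surWeight_eq (N d : ℕ) (w : Fin n → Fin N) :
    surWeight N d n w = ∏ i : Fin n,
      (1 + (cnt w i : ℝ) * ((d : ℝ) - 1)) / ((N : ℝ) + (i : ℕ) * ((d : ℝ) - 1)) := rfl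

/-- correction factor -/
noncomputable def Afac (N : ℕ) {n : ℕ} (w : Fin n → Fin N) : ℝ :=
  ∏ i ∈ univ.filter (fun i : Fin n => cnt w i = 0),
    ((N : ℝ) - fcnt w i) / ((n : ℝ) - fcnt w i)

theorem V_eq_surWeight_mul_Afac (d : ℕ) {ψ : Fin n → Fin N} (hψ : Function.Injective ψ)
    (u : Fin n → Fin n) :
    V N d u = surWeight N d n (ψ ∘ u) * Afac N (ψ ∘ u) := by
  rw [surWeight_eq, Afac, V]
  have hc : ∀ i, cnt (ψ ∘ u) i = cnt u i := cnt_comp hψ u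
  have hf : ∀ i, fcnt (ψ ∘ u) i = fcnt u i := fcnt_comp hψ u
  have hsplit : ∀ i : Fin n, factor N d i u
      = ((1 + (cnt u i : ℝ) * ((d : ℝ) - 1)) / ((N : ℝ) + (i : ℕ) * ((d : ℝ) - 1)))
        * (if cnt u i = 0 then ((N : ℝ) - fcnt u i) / ((n : ℝ) - fcnt u i) else 1) := by
    intro i
    rw [factor]
    by_cases h : cnt u i = 0
    · rw [if_pos h, if_pos h, h]
      push_cast
      ring
    · rw [if_neg h, if_neg h, mul_one]
  rw [Finset.prod_congr rfl (fun i _ => hsplit i), Finset.prod_mul_distrib]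
  congr 1
  · apply Finset.prod_congr rfl
    intro i _
    rw [hc]
  · rw [← Finset.prod_filter]
    apply Finset.prod_congr
    · apply filter_congr
      intro i _
      rw [hc]
    · intro i hi
      rw [hf]

theorem card_image_eq_card_fresh (w : Fin n → Fin N) :
    #(univ.image w) = #(univ.filter fun i : Fin n => cnt w i = 0) := by
  have h1 : (univ : Finset (Fin n)) = univ.filter (fun j : Fin n => (j : ℕ) < n) := by
    ext j; simp [j.isLt]
  have h2 : (univ.filter fun i : Fin n => cnt w i = 0)
      = univ.filter (fun j : Fin n => (j : ℕ) < n ∧ cnt w j = 0) := by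
    apply filter_congr; intro j _; simp [j.isLt]
  rw [h2, ← card_image_prefix w n]
  congr 1
  rw [← h1]

theorem Afac_eq (w : Fin n → Fin N) :
    Afac N w = ∏ k ∈ range #(univ.image w), ((N : ℝ) - k) / ((n : ℝ) - k) := by
  rw [Afac, card_image_eq_card_fresh]
  set F := univ.filter (fun i : Fin n => cnt w i = 0) with hF
  have hfc : ∀ i ∈ F, (fcnt w i : ℕ) = #(F.filter fun j => j < i) := by
    intro i _
    rw [fcnt, hF, Finset.filter_filter]
    congr 1
    apply filter_congr
    intro j _
    tauto
  have := prod_rank F (fun k => ((N : ℝ) - k) / ((n : ℝ) - k))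
  rw [← this]
  apply Finset.prod_congr rfl
  intro i hi
  rw [hfc i hi]

theorem sum_comp_eq {ψ : Fin n → Fin N} (hψ : Function.Injective ψ)
    (G : (Fin n → Fin N) → ℝ) :
    ∑ u : Fin n → Fin n, G (ψ ∘ u)
      = ∑ w : Fin n → Fin N, (if ∀ i, ∃ j, ψ j = w i then G w else 0) := by
  classical
  rw [← Finset.sum_filter]
  apply Finset.sum_nbij' (i := fun u => ψ ∘ u)
    (j := fun w i => if h : ∃ j, ψ j = w i then h.choose else i)
  · intro u _
    simp only [mem_filter, mem_univ, true_and]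
    intro i
    exact ⟨u i, rfl⟩
  · intro w _
    exact mem_univ _
  · intro u _
    funext i
    have hex : ∃ j, ψ j = (ψ ∘ u) i := ⟨u i, rfl⟩
    simp only [dif_pos hex]
    exact hψ hex.choose_spec
  · intro w hw
    simp only [mem_filter, mem_univ, true_and] at hw
    funext i
    have hex := hw i
    simp only [Function.comp_apply, dif_pos hex]
    exact hex.choose_spec
  · intro u _
    rfl

theorem barycenter (u : Fin n → Fin n) (g : Fin n → ℝ) :
    ∑ τ : Equiv.Perm (Fin n), ∑ i : Fin n, g (τ (u i))
      = (n.factorial : ℝ) * ∑ j, g j := by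
  rcases Nat.eq_zero_or_pos n with hn0 | hn0
  · subst hn0
    simp
  have hnne : (n : ℝ) ≠ 0 := by exact_mod_cast hn0.ne'
  rw [Finset.sum_comm]
  have hstep : ∀ i : Fin n, ∑ τ : Equiv.Perm (Fin n), g (τ (u i))
      = ((n.factorial : ℝ) * ∑ j, g j) / n := by
    intro i
    have h := perm_sum g (u i)
    rw [Fintype.card_fin] at h
    rw [eq_div_iff hnne]
    linarith
  rw [Finset.sum_congr rfl (fun i _ => hstep i), Finset.sum_const, card_univ,
    Fintype.card_fin, nsmul_eq_mul]
  field_simp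



variable {n N : ℕ}

theorem pcount_real (hn : n ≤ N) (S : Finset (Fin N)) (hS : #S ≤ n) :
    (#(univ.filter fun σ : Equiv.Perm (Fin N) => S ⊆ Timg hn σ) : ℝ)
      = (N.factorial : ℝ) * ∏ k ∈ range #S, ((n : ℝ) - k) / ((N : ℝ) - k) := by
  have h := pcount hn S hS
  have hcast := congrArg (fun x : ℕ => (x : ℝ)) h
  simp only [Nat.cast_mul, Nat.cast_prod] at hcast
  have hN : ∀ k ∈ range #S, ((N - k : ℕ) : ℝ) = (N : ℝ) - k := by
    intro k hk
    rw [mem_range] at hk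
    have : k ≤ N := le_trans (le_of_lt (lt_of_lt_of_le hk hS)) hn
    exact Nat.cast_sub this
  have hnn : ∀ k ∈ range #S, ((n - k : ℕ) : ℝ) = (n : ℝ) - k := by
    intro k hk
    rw [mem_range] at hk
    have : k ≤ n := le_of_lt (lt_of_lt_of_le hk hS)
    exact Nat.cast_sub this
  rw [Finset.prod_congr rfl hN, Finset.prod_congr rfl hnn] at hcast
  have hprodne : ∏ k ∈ range #S, ((N : ℝ) - k) ≠ 0 := by
    apply Finset.prod_ne_zero_iff.mpr
    intro k hk
    rw [mem_range] at hk
    have h1 : (k : ℝ) < (N : ℝ) := by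
      have : k < N := lt_of_lt_of_le (lt_of_lt_of_le hk hS) hn
      exact_mod_cast this
    linarith
  rw [Finset.prod_div_distrib, ← mul_div_assoc, eq_div_iff hprodne]
  exact hcast

theorem main_thm (N n d : ℕ) (hd : 1 ≤ d) (hn : n ≤ N)
    (c : Fin N → ℝ) (f : ℝ → ℝ) (hf : ConvexOn ℝ Set.univ f) :
    (N.factorial : ℝ)⁻¹ *
        ∑ σ : Equiv.Perm (Fin N), f (∑ i : Fin n, c (σ (Fin.castLE hn i)))
      ≤ ∑ w : Fin n → Fin N, surWeight N d n w * f (∑ i : Fin n, c (w i)) := by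
  have hNfacpos : (0 : ℝ) < (N.factorial : ℝ) := by exact_mod_cast N.factorial_pos
  have hnfacpos : (0 : ℝ) < (n.factorial : ℝ) := by exact_mod_cast n.factorial_pos
  have hnfacne : (n.factorial : ℝ) ≠ 0 := hnfacpos.ne'
  -- Jensen step
  have jensen : ∀ (σ : Equiv.Perm (Fin N)) (u : Fin n → Fin n),
      f (∑ i : Fin n, c (σ (Fin.castLE hn i)))
        ≤ ∑ τ : Equiv.Perm (Fin n),
            (n.factorial : ℝ)⁻¹ * f (∑ i : Fin n, c (σ (Fin.castLE hn (τ (u i))))) := by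
    intro σ u
    have hw1 : ∑ _τ : Equiv.Perm (Fin n), (n.factorial : ℝ)⁻¹ = 1 := by
      rw [Finset.sum_const, card_univ, Fintype.card_perm, Fintype.card_fin, nsmul_eq_mul]
      field_simp
    have hkey : ∑ τ : Equiv.Perm (Fin n),
        (n.factorial : ℝ)⁻¹ • (∑ i : Fin n, c (σ (Fin.castLE hn (τ (u i)))))
        = ∑ i : Fin n, c (σ (Fin.castLE hn i)) := by
      simp only [smul_eq_mul]
      rw [← Finset.mul_sum]
      rw [barycenter u (fun j => c (σ (Fin.castLE hn j)))]
      rw [← mul_assoc, inv_mul_cancel₀ hnfacne, one_mul]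
    have hjen := hf.map_sum_le (t := univ) (p := fun τ : Equiv.Perm (Fin n) =>
        ∑ i : Fin n, c (σ (Fin.castLE hn (τ (u i)))))
      (w := fun _ => (n.factorial : ℝ)⁻¹)
      (fun τ _ => by positivity) hw1 (fun τ _ => Set.mem_univ _)
    rw [hkey] at hjen
    simpa [smul_eq_mul] using hjen
  -- inner identity for fixed σ τ
  have hinner : ∀ (σ : Equiv.Perm (Fin N)) (τ : Equiv.Perm (Fin n)),
      ∑ u : Fin n → Fin n, V N d u * f (∑ i : Fin n, c (σ (Fin.castLE hn (τ (u i)))))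
        = ∑ w : Fin n → Fin N, (if univ.image w ⊆ Timg hn σ then
            surWeight N d n w * Afac N w * f (∑ i : Fin n, c (w i)) else 0) := by
    intro σ τ
    have hψ : Function.Injective (fun j : Fin n => σ (Fin.castLE hn (τ j))) :=
      fun a b hab => τ.injective (Fin.castLE_injective hn (σ.injective hab))
    have h1 : ∀ u : Fin n → Fin n,
        V N d u * f (∑ i : Fin n, c (σ (Fin.castLE hn (τ (u i)))))
        = (fun w : Fin n → Fin N => surWeight N d n w * Afac N w * f (∑ i : Fin n, c (w i)))
            ((fun j : Fin n => σ (Fin.castLE hn (τ j))) ∘ u) := by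
      intro u
      simp only [Function.comp_apply]
      rw [V_eq_surWeight_mul_Afac d hψ u]
    have h2 := sum_comp_eq hψ
      (fun w : Fin n → Fin N => surWeight N d n w * Afac N w * f (∑ i : Fin n, c (w i)))
    calc ∑ u : Fin n → Fin n, V N d u * f (∑ i : Fin n, c (σ (Fin.castLE hn (τ (u i)))))
        = ∑ u : Fin n → Fin n,
            (fun w : Fin n → Fin N => surWeight N d n w * Afac N w * f (∑ i : Fin n, c (w i)))
            ((fun j : Fin n => σ (Fin.castLE hn (τ j))) ∘ u) :=
          Finset.sum_congr rfl (fun u _ => h1 u)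
      _ = ∑ w : Fin n → Fin N,
            (if ∀ i, ∃ j, (fun j : Fin n => σ (Fin.castLE hn (τ j))) j = w i then
              surWeight N d n w * Afac N w * f (∑ i : Fin n, c (w i)) else 0) := h2
      _ = ∑ w : Fin n → Fin N, (if univ.image w ⊆ Timg hn σ then
            surWeight N d n w * Afac N w * f (∑ i : Fin n, c (w i)) else 0) := ?_
    apply Finset.sum_congr rfl
    intro w _
    have hcond : (∀ i, ∃ j, (fun j : Fin n => σ (Fin.castLE hn (τ j))) j = w i)
        ↔ (univ.image w ⊆ Timg hn σ) := by
      rw [Finset.image_subset_iff]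
      constructor
      · intro h i _
        obtain ⟨j, hj⟩ := h i
        simp only [Timg, mem_image, mem_univ, true_and]
        exact ⟨τ j, hj⟩
      · intro h i
        have := h i (mem_univ i)
        simp only [Timg, mem_image, mem_univ, true_and] at this
        obtain ⟨j', hj'⟩ := this
        exact ⟨τ.symm j', by simp [hj']⟩
    exact if_congr hcond rfl rfl
  -- per-w collapse
  have hperw : ∀ w : Fin n → Fin N,
      (N.factorial : ℝ)⁻¹ * ((#(univ.filter fun σ : Equiv.Perm (Fin N) =>
          univ.image w ⊆ Timg hn σ) : ℝ)
        * (surWeight N d n w * Afac N w * f (∑ i : Fin n, c (w i))))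
      = surWeight N d n w * f (∑ i : Fin n, c (w i)) := by
    intro w
    have hM : #(univ.image w) ≤ n := le_trans (card_image_le) (by simp)
    rw [pcount_real hn (univ.image w) hM, Afac_eq]
    have hprod : (∏ k ∈ range #(univ.image w), ((n : ℝ) - k) / ((N : ℝ) - k))
        * ∏ k ∈ range #(univ.image w), ((N : ℝ) - k) / ((n : ℝ) - k) = 1 := by
      rw [← Finset.prod_mul_distrib]
      rw [Finset.prod_congr rfl (fun k hk => ?_), Finset.prod_const_one]
      rw [mem_range] at hk
      have hkn : (k : ℝ) < (n : ℝ) := by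
        have : k < n := lt_of_lt_of_le hk hM
        exact_mod_cast this
      have hkN : (k : ℝ) < (N : ℝ) := by
        have : k < N := lt_of_lt_of_le (lt_of_lt_of_le hk hM) hn
        exact_mod_cast this
      have h1 : (n : ℝ) - k ≠ 0 := by linarith
      have h2 : (N : ℝ) - k ≠ 0 := by linarith
      rw [div_mul_div_comm, mul_comm ((N : ℝ) - k)]
      exact div_self (mul_ne_zero h1 h2)
    have halg : (N.factorial : ℝ)⁻¹ *
        (((N.factorial : ℝ) * ∏ k ∈ range #(univ.image w), ((n : ℝ) - k) / ((N : ℝ) - k))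
          * (surWeight N d n w * (∏ k ∈ range #(univ.image w), ((N : ℝ) - k) / ((n : ℝ) - k))
            * f (∑ i : Fin n, c (w i))))
        = ((N.factorial : ℝ)⁻¹ * (N.factorial : ℝ))
          * (((∏ k ∈ range #(univ.image w), ((n : ℝ) - k) / ((N : ℝ) - k))
              * ∏ k ∈ range #(univ.image w), ((N : ℝ) - k) / ((n : ℝ) - k))
            * (surWeight N d n w * f (∑ i : Fin n, c (w i)))) := by ring
    rw [halg, inv_mul_cancel₀ hNfacpos.ne', hprod, one_mul, one_mul]
  -- swap helper
  have hswap : ∀ (F : (Fin n → Fin n) → Equiv.Perm (Fin N) → Equiv.Perm (Fin n) → ℝ),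
      ∑ u : Fin n → Fin n, ∑ σ : Equiv.Perm (Fin N), ∑ τ : Equiv.Perm (Fin n), F u σ τ
        = ∑ σ : Equiv.Perm (Fin N), ∑ τ : Equiv.Perm (Fin n), ∑ u : Fin n → Fin n, F u σ τ := by
    intro F
    rw [Finset.sum_comm]
    exact Finset.sum_congr rfl (fun σ _ => Finset.sum_comm)
  calc (N.factorial : ℝ)⁻¹ *
        ∑ σ : Equiv.Perm (Fin N), f (∑ i : Fin n, c (σ (Fin.castLE hn i)))
      = ∑ u : Fin n → Fin n, V N d u *
          ((N.factorial : ℝ)⁻¹ *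
            ∑ σ : Equiv.Perm (Fin N), f (∑ i : Fin n, c (σ (Fin.castLE hn i)))) := by
        rw [← Finset.sum_mul, sum_V hd hn, one_mul]
    _ ≤ ∑ u : Fin n → Fin n, V N d u *
          ((N.factorial : ℝ)⁻¹ * ∑ σ : Equiv.Perm (Fin N), ∑ τ : Equiv.Perm (Fin n),
            (n.factorial : ℝ)⁻¹ * f (∑ i : Fin n, c (σ (Fin.castLE hn (τ (u i)))))) := by
        apply Finset.sum_le_sum
        intro u _
        apply mul_le_mul_of_nonneg_left _ (V_nonneg hd hn u)
        apply mul_le_mul_of_nonneg_left _ (inv_nonneg.mpr hNfacpos.le)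
        exact Finset.sum_le_sum (fun σ _ => jensen σ u)
    _ = ∑ u : Fin n → Fin n, ∑ σ : Equiv.Perm (Fin N), ∑ τ : Equiv.Perm (Fin n),
          V N d u * ((N.factorial : ℝ)⁻¹ *
            ((n.factorial : ℝ)⁻¹ * f (∑ i : Fin n, c (σ (Fin.castLE hn (τ (u i))))))) := by
        apply Finset.sum_congr rfl
        intro u _
        rw [Finset.mul_sum, Finset.mul_sum]
        apply Finset.sum_congr rfl
        intro σ _
        rw [Finset.mul_sum, Finset.mul_sum]
    _ = ∑ σ : Equiv.Perm (Fin N), ∑ τ : Equiv.Perm (Fin n), ∑ u : Fin n → Fin n,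
          V N d u * ((N.factorial : ℝ)⁻¹ *
            ((n.factorial : ℝ)⁻¹ * f (∑ i : Fin n, c (σ (Fin.castLE hn (τ (u i))))))) :=
        hswap _
    _ = (N.factorial : ℝ)⁻¹ * ((n.factorial : ℝ)⁻¹ *
          ∑ σ : Equiv.Perm (Fin N), ∑ τ : Equiv.Perm (Fin n), ∑ u : Fin n → Fin n,
            V N d u * f (∑ i : Fin n, c (σ (Fin.castLE hn (τ (u i)))))) := by
        rw [Finset.mul_sum, Finset.mul_sum]
        apply Finset.sum_congr rfl
        intro σ _
        rw [Finset.mul_sum, Finset.mul_sum]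
        apply Finset.sum_congr rfl
        intro τ _
        rw [Finset.mul_sum, Finset.mul_sum]
        apply Finset.sum_congr rfl
        intro u _
        ring
    _ = (N.factorial : ℝ)⁻¹ * ((n.factorial : ℝ)⁻¹ *
          ∑ σ : Equiv.Perm (Fin N), ∑ _τ : Equiv.Perm (Fin n),
            ∑ w : Fin n → Fin N, (if univ.image w ⊆ Timg hn σ then
              surWeight N d n w * Afac N w * f (∑ i : Fin n, c (w i)) else 0)) := by
        congr 1
        congr 1
        apply Finset.sum_congr rfl
        intro σ _
        exact Finset.sum_congr rfl (fun τ _ => hinner σ τ)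
    _ = (N.factorial : ℝ)⁻¹ * ((n.factorial : ℝ)⁻¹ * ((n.factorial : ℕ) •
          ∑ σ : Equiv.Perm (Fin N),
            ∑ w : Fin n → Fin N, (if univ.image w ⊆ Timg hn σ then
              surWeight N d n w * Afac N w * f (∑ i : Fin n, c (w i)) else 0))) := by
        congr 1
        congr 1
        rw [Finset.smul_sum]
        apply Finset.sum_congr rfl
        intro σ _
        rw [Finset.sum_const, card_univ, Fintype.card_perm, Fintype.card_fin]
    _ = (N.factorial : ℝ)⁻¹ *
          ∑ σ : Equiv.Perm (Fin N),
            ∑ w : Fin n → Fin N, (if univ.image w ⊆ Timg hn σ then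
              surWeight N d n w * Afac N w * f (∑ i : Fin n, c (w i)) else 0) := by
        rw [nsmul_eq_mul]
        field_simp
    _ = (N.factorial : ℝ)⁻¹ *
          ∑ w : Fin n → Fin N, ∑ σ : Equiv.Perm (Fin N),
            (if univ.image w ⊆ Timg hn σ then
              surWeight N d n w * Afac N w * f (∑ i : Fin n, c (w i)) else 0) := by
        rw [Finset.sum_comm]
    _ = ∑ w : Fin n → Fin N, (N.factorial : ℝ)⁻¹ *
          ((#(univ.filter fun σ : Equiv.Perm (Fin N) => univ.image w ⊆ Timg hn σ) : ℝ)
            * (surWeight N d n w * Afac N w * f (∑ i : Fin n, c (w i)))) := by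
        rw [Finset.mul_sum]
        apply Finset.sum_congr rfl
        intro w _
        congr 1
        rw [← Finset.sum_filter, Finset.sum_const, nsmul_eq_mul]
    _ = ∑ w : Fin n → Fin N, surWeight N d n w * f (∑ i : Fin n, c (w i)) :=
        Finset.sum_congr rfl (fun w _ => hperw w)

end Surrepl

/-- Sampling `n ≤ N` values without replacement from `c_1,…,c_N` is dominated in the
convex order by sampling `n` values with surreplacement with parameter `d ≥ 1` (each drawn
value is returned together with `d - 1` extra copies of itself). -/
theorem surreplacement_convex_order (N n d : ℕ) (hd : 1 ≤ d) (hn : n ≤ N)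
    (c : Fin N → ℝ) (f : ℝ → ℝ) (hf : ConvexOn ℝ Set.univ f) :
    (N.factorial : ℝ)⁻¹ *
        ∑ σ : Equiv.Perm (Fin N), f (∑ i : Fin n, c (σ (Fin.castLE hn i)))
      ≤ ∑ w : Fin n → Fin N, surWeight N d n w * f (∑ i : Fin n, c (w i)) :=
  Surrepl.main_thm N n d hd hn c f hf
end
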